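/- arXiv:1704.05428 — 7 statements merged into one kernel-verified Lean document; each statement's English description precedes it below -/
import Mathlib

section
/- Let (M,d) be a metric space and G a compact group acting on M by isometries, and let d* be the quotient metric on M* = M/G defined by d*(x*,y*) = inf over g,h in G of d(gx,hy). If φ : M* → ℝ ∪ {-∞} is a c_p-concave function (i.e. φ = ψ^{c_p} for some ψ, where ψ^{c_p}(x) = inf_y (d*(x,y)^p - ψ(y))), then the lift φ̂ : M → ℝ ∪ {-∞} defined by φ̂(x) := φ(p(x)), where p : M → M* is the quotient map, is c_p-concave with respect to d. -/
open MeasureTheory Filter Set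

/-- A function `φ : X → ℝ ∪ {-∞}` (encoded as `EReal`-valued) on a metric space is
`c_p`-concave if it is the `c_p`-transform of some function `ψ`, i.e.
`φ x = ⨅ y, (dist x y ^ p - ψ y)`. -/
def CpConcave (p : ℝ) {X : Type*} [PseudoMetricSpace X] (φ : X → EReal) : Prop :=
  ∃ ψ : X → EReal, ∀ x, φ x = ⨅ y, (((dist x y ^ p : ℝ) : EReal) - ψ y)

/-- Let `(M,d)` be a metric space and `G` a compact group acting on `M` by
isometries, with quotient map `pr : M → Q` onto the quotient metric space `(Q, d*)`, where
`d*(pr x, pr y) = ⨅ g, d(g • x, y)`.  If `φ : Q → ℝ ∪ {-∞}` is `c_p`-concave on `Q`, then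
its lift `φ ∘ pr : M → ℝ ∪ {-∞}` is `c_p`-concave on `M`. -/
theorem lift_of_cpConcave_is_cpConcave
    {M : Type*} [MetricSpace M]
    {G : Type*} [Group G] [TopologicalSpace G] [CompactSpace G] [MulAction G M]
    (hiso : ∀ (g : G) (x y : M), dist (g • x) (g • y) = dist x y)
    {Q : Type*} [MetricSpace Q] (pr : M → Q)
    (hsurj : Function.Surjective pr)
    (hfib : ∀ x y : M, pr x = pr y ↔ y ∈ MulAction.orbit G x)
    (hdist : ∀ x y : M, dist (pr x) (pr y) = ⨅ g : G, dist (g • x) y)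
    (p : ℝ) (hp : 1 < p)
    (φ : Q → EReal) (hφ : CpConcave p φ) :
    CpConcave p (φ ∘ pr) := by
  obtain ⟨ψ, hψ⟩ := hφ
  have hp0 : (0:ℝ) < p := lt_trans one_pos hp
  refine ⟨ψ ∘ pr, fun x => ?_⟩
  simp only [Function.comp_apply]
  rw [hψ (pr x)]
  rw [← hsurj.iInf_comp (g := fun q => (((dist (pr x) q ^ p : ℝ) : EReal) - ψ q))]
  have hbdd : ∀ y : M, BddBelow (Set.range fun g : G => dist (g • x) y) := by
    intro y
    exact ⟨0, by rintro _ ⟨g, rfl⟩; exact dist_nonneg⟩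
  apply le_antisymm
  · refine iInf_mono fun y => ?_
    have h1 : dist (pr x) (pr y) ≤ dist x y := by
      rw [hdist]
      exact ciInf_le_of_le (hbdd y) 1 (by rw [one_smul])
    have h2 : dist (pr x) (pr y) ^ p ≤ dist x y ^ p :=
      Real.rpow_le_rpow dist_nonneg h1 hp0.le
    exact EReal.sub_le_sub (EReal.coe_le_coe_iff.2 h2) le_rfl
  · refine le_iInf fun y => ?_
    rcases eq_or_ne (ψ (pr y)) ⊥ with hb | hb
    · rw [hb, EReal.sub_bot (EReal.coe_ne_bot _)]
      exact le_top
    rcases eq_or_ne (ψ (pr y)) ⊤ with ht | ht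
    · rw [ht]
      refine iInf_le_of_le y ?_
      rw [ht]
      simp [EReal.sub_top]
    obtain ⟨r, hr⟩ : ∃ r : ℝ, ψ (pr y) = (r : EReal) :=
      ⟨(ψ (pr y)).toReal, (EReal.coe_toReal ht hb).symm⟩
    rw [hr, ← EReal.coe_sub]
    refine le_of_forall_gt_imp_ge_of_dense fun z hz => ?_
    obtain ⟨w, hw1, hw2⟩ := exists_between hz
    obtain ⟨s, rfl⟩ : ∃ s : ℝ, w = (s : EReal) :=
      ⟨w.toReal, (EReal.coe_toReal (hw2.trans_le le_top).ne
        (bot_le.trans_lt hw1).ne').symm⟩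
    have hs : dist (pr x) (pr y) ^ p - r < s := EReal.coe_lt_coe_iff.1 hw1
    have hs' : dist (pr x) (pr y) ^ p < s + r := by linarith
    have hsr_nonneg : (0:ℝ) < s + r :=
      lt_of_le_of_lt (Real.rpow_nonneg dist_nonneg p) hs'
    -- t := (s+r)^(1/p) is > dist*(pr x, pr y)
    set t : ℝ := (s + r) ^ p⁻¹ with htdef
    have hdlt : dist (pr x) (pr y) < t := by
      have := Real.rpow_lt_rpow (Real.rpow_nonneg dist_nonneg p) hs'
        (inv_pos.2 hp0)
      rwa [← Real.rpow_mul dist_nonneg,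
        mul_inv_cancel₀ hp0.ne', Real.rpow_one] at this
    have : (⨅ g : G, dist (g • x) y) < t := by rw [← hdist]; exact hdlt
    obtain ⟨g, hg⟩ := exists_lt_of_ciInf_lt this
    have hdg : dist x (g⁻¹ • y) = dist (g • x) y := by
      rw [← hiso g x (g⁻¹ • y), smul_inv_smul]
    have hpry : pr (g⁻¹ • y) = pr y := by
      symm; rw [hfib]; exact ⟨g⁻¹, rfl⟩
    refine iInf_le_of_le (g⁻¹ • y) ?_
    rw [hpry, hr, ← EReal.coe_sub]
    refine le_trans (le_of_lt ?_) hw2.le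
    rw [EReal.coe_lt_coe_iff]
    have h1 : dist x (g⁻¹ • y) ^ p < t ^ p := by
      rw [hdg]
      exact Real.rpow_lt_rpow dist_nonneg hg hp0
    have h2 : t ^ p = s + r := Real.rpow_inv_rpow hsr_nonneg.le hp0.ne'
    rw [h2] at h1
    linarith
end

section
/- Let (M,d) be a metric space, G a compact group acting by isometries, and let OD := {(x,y) ∈ M×M : d(x,y) = d*(x*,y*)} be the set of pairs realizing the distance between their orbits. For (x,y) ∈ OD define π_{x,y} := (⋆_{(x,y)})_♯ ν_G ∈ P(M×M), where ⋆_{(x,y)}(g) = (gx,gy) and ν_G is the Haar probability measure. Then for all (x,y) ∈ OD: (1) W_p(ν_x, ν_y) = d*(x*,y*), and (2) π_{x,y} is a p-optimal coupling of (ν_x, ν_y). -/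
/-!
The coupling `π_{x,y}` moves `g • x` to `g • y`, at distance `d(x,y) = d*(x*,y*)` by isometry
invariance, so its cost is `d*^p`. Conversely, every coupling of `ν_x` and `ν_y` is concentrated
on `closure (G • x) ×ˢ closure (G • y)`, and there all distances are at least `d*`, because
`d(g • x, h • y) = d((h⁻¹ * g) • x, y)`. Hence `d*^p` is the minimal cost and `π_{x,y}` attains it.
-/

open MeasureTheory Set
open scoped ENNReal

def IsCoupling {X : Type*} [MeasurableSpace X]
    (π : Measure (X × X)) (μ ν : Measure X) : Prop :=
  π.map Prod.fst = μ ∧ π.map Prod.snd = ν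

noncomputable def transportCost (p : ℝ) {X : Type*} [PseudoMetricSpace X] [MeasurableSpace X]
    (π : Measure (X × X)) : ℝ≥0∞ :=
  ∫⁻ z, ENNReal.ofReal (dist z.1 z.2 ^ p) ∂π

noncomputable def minCost (p : ℝ) {X : Type*} [PseudoMetricSpace X] [MeasurableSpace X]
    (μ ν : Measure X) : ℝ≥0∞ :=
  ⨅ π : {π : Measure (X × X) // IsCoupling π μ ν}, transportCost p π.1

noncomputable def Wp (p : ℝ) {X : Type*} [PseudoMetricSpace X] [MeasurableSpace X]
    (μ ν : Measure X) : ℝ≥0∞ :=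
  minCost p μ ν ^ (1 / p)

def IsOptimalCoupling (p : ℝ) {X : Type*} [PseudoMetricSpace X] [MeasurableSpace X]
    (π : Measure (X × X)) (μ ν : Measure X) : Prop :=
  IsCoupling π μ ν ∧ transportCost p π = minCost p μ ν

section Coupling

variable {X : Type*} [MeasurableSpace X]

theorem IsCoupling.ae_fst {π : Measure (X × X)} {μ ν : Measure X} (hπ : IsCoupling π μ ν)
    {P : X → Prop} (h : ∀ᵐ a ∂μ, P a) : ∀ᵐ z ∂π, P z.1 :=
  ae_of_ae_map measurable_fst.aemeasurable (hπ.1 ▸ h)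

theorem IsCoupling.ae_snd {π : Measure (X × X)} {μ ν : Measure X} (hπ : IsCoupling π μ ν)
    {P : X → Prop} (h : ∀ᵐ b ∂ν, P b) : ∀ᵐ z ∂π, P z.2 :=
  ae_of_ae_map measurable_snd.aemeasurable (hπ.2 ▸ h)

theorem IsCoupling.isProbabilityMeasure {π : Measure (X × X)} {μ ν : Measure X}
    [IsProbabilityMeasure μ] (hπ : IsCoupling π μ ν) : IsProbabilityMeasure π := by
  constructor
  rw [← preimage_univ, ← Measure.map_apply measurable_fst MeasurableSet.univ, hπ.1, measure_univ]

theorem isCoupling_map_prodMk {α : Type*} [MeasurableSpace α] (ν : Measure α) {f g : α → X}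
    (hf : Measurable f) (hg : Measurable g) :
    IsCoupling (ν.map fun a => (f a, g a)) (ν.map f) (ν.map g) :=
  ⟨Measure.map_map measurable_fst (hf.prodMk hg), Measure.map_map measurable_snd (hf.prodMk hg)⟩

end Coupling

section Cost

variable {X : Type*} [PseudoMetricSpace X] [MeasurableSpace X] {p : ℝ}

theorem transportCost_map_prodMk_le_of_dist_eq {α : Type*} [MeasurableSpace α]
    (ν : Measure α) [IsProbabilityMeasure ν] {f g : α → X} {c : ℝ}
    (hfg : ∀ a, dist (f a) (g a) = c) :
    transportCost p (ν.map fun a => (f a, g a)) ≤ ENNReal.ofReal (c ^ p) :=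
  (lintegral_map_le _ _).trans (by simp [hfg])

theorem ofReal_rpow_le_transportCost {π : Measure (X × X)} [IsProbabilityMeasure π] {c : ℝ}
    (hc : 0 ≤ c) (hp : 0 ≤ p) (hdist : ∀ᵐ z ∂π, c ≤ dist z.1 z.2) :
    ENNReal.ofReal (c ^ p) ≤ transportCost p π :=
  calc ENNReal.ofReal (c ^ p) = ∫⁻ _, ENNReal.ofReal (c ^ p) ∂π := by simp
    _ ≤ transportCost p π :=
      lintegral_mono_ae <| hdist.mono fun _ hz =>
        ENNReal.ofReal_le_ofReal (Real.rpow_le_rpow hc hz hp)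

theorem minCost_eq_of_isCoupling {π : Measure (X × X)} {μ ν : Measure X} {c : ℝ≥0∞}
    (hπ : IsCoupling π μ ν) (hle : transportCost p π ≤ c)
    (hge : ∀ π', IsCoupling π' μ ν → c ≤ transportCost p π') :
    minCost p μ ν = c :=
  le_antisymm ((iInf_le _ ⟨π, hπ⟩).trans hle) (le_iInf fun π' => hge π'.1 π'.2)

theorem IsCoupling.isOptimalCoupling {π : Measure (X × X)} {μ ν : Measure X} {c : ℝ≥0∞}
    (hπ : IsCoupling π μ ν) (hle : transportCost p π ≤ c)
    (hge : ∀ π', IsCoupling π' μ ν → c ≤ transportCost p π') :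
    IsOptimalCoupling p π μ ν :=
  ⟨hπ, (le_antisymm hle (hge π hπ)).trans (minCost_eq_of_isCoupling hπ hle hge).symm⟩

theorem Wp_eq_ofReal_of_minCost_eq {μ ν : Measure X} {c : ℝ} (hp : 0 < p) (hc : 0 ≤ c)
    (h : minCost p μ ν = ENNReal.ofReal (c ^ p)) : Wp p μ ν = ENNReal.ofReal c := by
  rw [Wp, h, ← ENNReal.ofReal_rpow_of_nonneg hc hp.le, ← ENNReal.rpow_mul,
    mul_one_div_cancel hp.ne', ENNReal.rpow_one]

end Cost

theorem ae_map_mem_closure_range {α X : Type*} [MeasurableSpace α] [TopologicalSpace X]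
    [MeasurableSpace X] [OpensMeasurableSpace X] (ν : Measure α) {f : α → X}
    (hf : Measurable f) : ∀ᵐ a ∂ν.map f, a ∈ closure (range f) :=
  (ae_map_iff hf.aemeasurable isClosed_closure.measurableSet).2 <|
    ae_of_all _ fun a => subset_closure (mem_range_self a)

section Orbit

variable (G : Type*) {M : Type*} [Group G] [MulAction G M] [PseudoMetricSpace M]

/-- The distance `d*(x*, y*)` between the orbits of `x` and `y`. -/
noncomputable def orbitDist (x y : M) : ℝ := ⨅ g : G, dist (g • x) y

variable {G}

theorem orbitDist_nonneg (x y : M) : 0 ≤ orbitDist G x y :=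
  Real.iInf_nonneg fun _ => dist_nonneg

variable [IsIsometricSMul G M]

theorem orbitDist_le_dist_smul_smul (x y : M) (g h : G) :
    orbitDist G x y ≤ dist (g • x) (h • y) :=
  calc orbitDist G x y ≤ dist ((h⁻¹ * g) • x) y :=
        ciInf_le ⟨0, forall_mem_range.2 fun _ => dist_nonneg⟩ _
    _ = dist (g • x) (h • y) := by
        rw [← dist_smul h, smul_smul, mul_inv_cancel_left]

theorem orbitDist_le_dist_of_mem_closure {x y a b : M}
    (ha : a ∈ closure (MulAction.orbit G x)) (hb : b ∈ closure (MulAction.orbit G y)) :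
    orbitDist G x y ≤ dist a b :=
  isClosed_Ici.closure_subset <| map_mem_closure₂ continuous_dist ha hb
    fun _ ⟨g, hg⟩ _ ⟨h, hh⟩ => hg ▸ hh ▸ orbitDist_le_dist_smul_smul x y g h

theorem ofReal_orbitDist_rpow_le_transportCost [MeasurableSpace M] [OpensMeasurableSpace M]
    [MeasurableSpace G] (ν : Measure G) [IsProbabilityMeasure ν] {x y : M}
    (hx : Measurable fun g : G => g • x) (hy : Measurable fun g : G => g • y)
    {p : ℝ} (hp : 0 ≤ p) {π : Measure (M × M)}
    (hπ : IsCoupling π (ν.map fun g => g • x) (ν.map fun g => g • y)) :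
    ENNReal.ofReal (orbitDist G x y ^ p) ≤ transportCost p π := by
  have := Measure.isProbabilityMeasure_map (μ := ν) hx.aemeasurable
  have := hπ.isProbabilityMeasure
  refine ofReal_rpow_le_transportCost (orbitDist_nonneg x y) hp ?_
  filter_upwards [hπ.ae_fst (ae_map_mem_closure_range ν hx),
    hπ.ae_snd (ae_map_mem_closure_range ν hy)] with z ha hb
  exact orbitDist_le_dist_of_mem_closure ha hb

end Orbit

theorem haar_coupling_optimal_general
    {M : Type*} [MetricSpace M] [MeasurableSpace M] [BorelSpace M]
    {G : Type*} [Group G] [TopologicalSpace G]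
    [MeasurableSpace G] [BorelSpace G] [MulAction G M]
    (hcont : Continuous fun q : G × M => q.1 • q.2)
    (hiso : ∀ (g : G) (x y : M), dist (g • x) (g • y) = dist x y)
    (νG : Measure G) [IsProbabilityMeasure νG]
    (p : ℝ) (hp : 1 ≤ p)
    (x y : M) (hOD : dist x y = ⨅ g : G, dist (g • x) y) :
    Wp p (νG.map fun g => g • x) (νG.map fun g => g • y)
        = ENNReal.ofReal (⨅ g : G, dist (g • x) y) ∧
    IsOptimalCoupling p (νG.map fun g => (g • x, g • y))
      (νG.map fun g => g • x) (νG.map fun g => g • y) := by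
  have : IsIsometricSMul G M := ⟨fun g => Isometry.of_dist_eq (hiso g)⟩
  have hp0 : 0 < p := zero_lt_one.trans_le hp
  have hmeas (z : M) : Measurable fun g : G => g • z :=
    (hcont.comp (continuous_id.prodMk continuous_const)).measurable
  have hπ := isCoupling_map_prodMk νG (hmeas x) (hmeas y)
  have hle : transportCost p (νG.map fun g => (g • x, g • y)) ≤
      ENNReal.ofReal (orbitDist G x y ^ p) :=
    transportCost_map_prodMk_le_of_dist_eq νG fun g => (hiso g x y).trans hOD
  have hge : ∀ π, IsCoupling π (νG.map fun g => g • x) (νG.map fun g => g • y) →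
      ENNReal.ofReal (orbitDist G x y ^ p) ≤ transportCost p π :=
    fun _ => ofReal_orbitDist_rpow_le_transportCost νG (hmeas x) (hmeas y) hp0.le
  exact ⟨Wp_eq_ofReal_of_minCost_eq hp0 (orbitDist_nonneg x y)
    (minCost_eq_of_isCoupling hπ hle hge), hπ.isOptimalCoupling hle hge⟩

/-- Let `G` be a compact group acting by isometries on a metric space `M`,
with Haar probability measure `νG`.  Suppose `(x,y)` realizes the distance between their
orbits, i.e. `d(x,y) = ⨅ g, d(g • x, y) = d*(x*,y*)`.  Let `ν_x, ν_y` be the pushforwards of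
`νG` under `g ↦ g • x`, `g ↦ g • y`, and `π_{x,y}` the pushforward under `g ↦ (g • x, g • y)`.
Then `W_p(ν_x, ν_y) = d*(x*,y*)` and `π_{x,y}` is a `p`-optimal coupling of `(ν_x, ν_y)`. -/
theorem haar_coupling_optimal
    {M : Type*} [MetricSpace M] [MeasurableSpace M] [BorelSpace M]
    {G : Type*} [Group G] [TopologicalSpace G] [IsTopologicalGroup G] [CompactSpace G]
    [MeasurableSpace G] [BorelSpace G] [MulAction G M]
    (hcont : Continuous fun q : G × M => q.1 • q.2)
    (hiso : ∀ (g : G) (x y : M), dist (g • x) (g • y) = dist x y)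
    (νG : Measure G) [IsProbabilityMeasure νG] [νG.IsMulLeftInvariant]
    (p : ℝ) (hp : 1 ≤ p)
    (x y : M) (hOD : dist x y = ⨅ g : G, dist (g • x) y) :
    Wp p (νG.map fun g => g • x) (νG.map fun g => g • y)
        = ENNReal.ofReal (⨅ g : G, dist (g • x) y) ∧
    IsOptimalCoupling p (νG.map fun g => (g • x, g • y))
      (νG.map fun g => g • x) (νG.map fun g => g • y) :=
  haar_coupling_optimal_general hcont hiso νG p hp x y hOD
end

section
/- Let (M,d) be a metric space, Γ ⊂ M×M a c_p-cyclically monotone set, and s,t ∈ [0,1]. Define Γ_{s,t} := {(γ_s, γ_t) : γ ∈ Geo(M), (γ₀, γ₁) ∈ Γ}, the set of pairs of intermediate points along geodesics whose endpoints lie in Γ. Then Γ_{s,t} is c_p-cyclically monotone. -/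
/-!
Write `ℓᵢ = d(γᵢ 0, γᵢ 1)` and `Dᵢ = d(γᵢ s, γ_{σ i} t)`. If `s ≤ t`, the triangle inequality
through `γᵢ s` and `γ_{σ i} t` bounds `d(γᵢ 0, γ_{σ i} 1)` by `s ℓᵢ + Dᵢ + (1 - t) ℓ_{σ i}`, so
cyclic monotonicity of `Γ` gives `‖ℓ‖ₚᵖ ≤ ∑ (s ℓᵢ + (1 - t) ℓ_{σ i} + Dᵢ)ᵖ`. Minkowski's inequality
and `‖ℓ ∘ σ‖ₚ = ‖ℓ‖ₚ` turn this into `(t - s) ‖ℓ‖ₚ ≤ ‖D‖ₚ`, which is the claim because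
`d(γᵢ s, γᵢ t) = (t - s) ℓᵢ`. If `t ≤ s`, the same argument runs from `γ_{σ i} 0` through
`γ_{σ i} t` and `γᵢ s` to `γᵢ 1`, using cyclic monotonicity with `σ⁻¹`.
-/

open Set

/-- A set `Γ ⊂ X × X` is `c_p`-cyclically monotone for the cost `c_p(x,y) = d(x,y)^p`. -/
def CpCyclicallyMonotone (p : ℝ) {X : Type*} [PseudoMetricSpace X] (Γ : Set (X × X)) : Prop :=
  ∀ (n : ℕ) (f : Fin n → X × X), (∀ i, f i ∈ Γ) → ∀ σ : Equiv.Perm (Fin n),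
    (∑ i, dist (f i).1 (f i).2 ^ p) ≤ ∑ i, dist (f i).1 (f (σ i)).2 ^ p

/-- A constant-speed geodesic parametrized on `[0,1]`. -/
def IsGeodesicOn {X : Type*} [PseudoMetricSpace X] (γ : ℝ → X) : Prop :=
  ∀ s ∈ Icc (0:ℝ) 1, ∀ t ∈ Icc (0:ℝ) 1, dist (γ s) (γ t) = |s - t| * dist (γ 0) (γ 1)

open Finset

section LpSum

variable {ι : Type*} [Fintype ι] {p : ℝ}

theorem Lp_const_mul_of_nonneg (hp : 0 < p) {c : ℝ} (hc : 0 ≤ c) {f : ι → ℝ}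
    (hf : ∀ i, 0 ≤ f i) :
    (∑ i, (c * f i) ^ p) ^ (1 / p) = c * (∑ i, f i ^ p) ^ (1 / p) := by
  simp_rw [Real.mul_rpow hc (hf _), ← mul_sum]
  rw [Real.mul_rpow (by positivity) (sum_nonneg fun i _ => Real.rpow_nonneg (hf i) p), one_div,
    Real.rpow_rpow_inv hc hp.ne']

theorem sum_mul_rpow_le_of_le_sum_add_rpow (hp : 1 ≤ p) {ℓ d : ι → ℝ} (hℓ : ∀ i, 0 ≤ ℓ i)
    (hd : ∀ i, 0 ≤ d i) (σ : Equiv.Perm ι) {a b e : ℝ} (ha : 0 ≤ a) (hb : 0 ≤ b) (he : 0 ≤ e)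
    (habe : a + b + e = 1) (h : ∑ i, ℓ i ^ p ≤ ∑ i, (a * ℓ i + b * ℓ (σ i) + d i) ^ p) :
    ∑ i, (e * ℓ i) ^ p ≤ ∑ i, d i ^ p := by
  have hp0 : 0 < p := zero_lt_one.trans_le hp
  have hab : ∀ i, 0 ≤ a * ℓ i + b * ℓ (σ i) := fun i =>
    add_nonneg (mul_nonneg ha (hℓ i)) (mul_nonneg hb (hℓ (σ i)))
  have hNℓ : (∑ i, ℓ i ^ p) ^ (1 / p) ≤
      a * (∑ i, ℓ i ^ p) ^ (1 / p) + b * (∑ i, ℓ i ^ p) ^ (1 / p) + (∑ i, d i ^ p) ^ (1 / p) :=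
    calc (∑ i, ℓ i ^ p) ^ (1 / p)
        ≤ (∑ i, (a * ℓ i + b * ℓ (σ i) + d i) ^ p) ^ (1 / p) :=
          Real.rpow_le_rpow (sum_nonneg fun i _ => Real.rpow_nonneg (hℓ i) p) h (by positivity)
      _ ≤ (∑ i, (a * ℓ i + b * ℓ (σ i)) ^ p) ^ (1 / p) + (∑ i, d i ^ p) ^ (1 / p) :=
          Real.Lp_add_le_of_nonneg univ hp (fun i _ => hab i) (fun i _ => hd i)
      _ ≤ (∑ i, (a * ℓ i) ^ p) ^ (1 / p) + (∑ i, (b * ℓ (σ i)) ^ p) ^ (1 / p) +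
            (∑ i, d i ^ p) ^ (1 / p) := by
          gcongr
          exact Real.Lp_add_le_of_nonneg univ hp (fun i _ => mul_nonneg ha (hℓ i))
            (fun i _ => mul_nonneg hb (hℓ (σ i)))
      _ = _ := by
          rw [Lp_const_mul_of_nonneg hp0 ha hℓ, Lp_const_mul_of_nonneg hp0 hb (fun i => hℓ (σ i)),
            Equiv.sum_comp σ (fun i => ℓ i ^ p)]
  have hNeℓ : (∑ i, (e * ℓ i) ^ p) ^ (1 / p) ≤ (∑ i, d i ^ p) ^ (1 / p) := by
    rw [Lp_const_mul_of_nonneg hp0 he hℓ]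
    linear_combination hNℓ + (∑ i, ℓ i ^ p) ^ (1 / p) * habe
  exact (Real.rpow_le_rpow_iff (sum_nonneg fun i _ => Real.rpow_nonneg (mul_nonneg he (hℓ i)) p)
    (sum_nonneg fun i _ => Real.rpow_nonneg (hd i) p) (by positivity)).1 hNeℓ

end LpSum

namespace IsGeodesicOn

variable {X : Type*} [PseudoMetricSpace X] {γ γ' : ℝ → X} {s t : ℝ}

theorem dist_zero_apply (hγ : IsGeodesicOn γ) (hs : s ∈ Icc (0 : ℝ) 1) :
    dist (γ 0) (γ s) = s * dist (γ 0) (γ 1) := by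
  rw [hγ 0 (left_mem_Icc.2 zero_le_one) s hs, zero_sub, abs_neg, abs_of_nonneg hs.1]

theorem dist_apply_one (hγ : IsGeodesicOn γ) (hs : s ∈ Icc (0 : ℝ) 1) :
    dist (γ s) (γ 1) = (1 - s) * dist (γ 0) (γ 1) := by
  rw [hγ s hs 1 (right_mem_Icc.2 zero_le_one), abs_sub_comm, abs_of_nonneg (sub_nonneg.2 hs.2)]

theorem dist_zero_one_le (hγ : IsGeodesicOn γ) (hγ' : IsGeodesicOn γ') (hs : s ∈ Icc (0 : ℝ) 1)
    (ht : t ∈ Icc (0 : ℝ) 1) :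
    dist (γ 0) (γ' 1) ≤
      s * dist (γ 0) (γ 1) + (1 - t) * dist (γ' 0) (γ' 1) + dist (γ s) (γ' t) :=
  calc dist (γ 0) (γ' 1) ≤ dist (γ 0) (γ s) + dist (γ s) (γ' t) + dist (γ' t) (γ' 1) :=
        dist_triangle4 _ _ _ _
    _ = _ := by rw [hγ.dist_zero_apply hs, hγ'.dist_apply_one ht]; ring

end IsGeodesicOn

theorem CpCyclicallyMonotone.sum_le_sum_perm_fst {X : Type*} [PseudoMetricSpace X] {p : ℝ}
    {Γ : Set (X × X)} (hΓ : CpCyclicallyMonotone p Γ) {n : ℕ} {f : Fin n → X × X}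
    (hf : ∀ i, f i ∈ Γ) (σ : Equiv.Perm (Fin n)) :
    ∑ i, dist (f i).1 (f i).2 ^ p ≤ ∑ i, dist (f (σ i)).1 (f i).2 ^ p :=
  (hΓ n f hf σ⁻¹).trans_eq <|
    (Equiv.sum_comp σ fun i => dist (f i).1 (f (σ⁻¹ i)).2 ^ p).symm.trans (by simp)

/-- If `Γ ⊂ M × M` is `c_p`-cyclically monotone and `s, t ∈ [0,1]`, then
the set `Γ_{s,t}` of pairs `(γ_s, γ_t)` of intermediate points along geodesics whose
endpoints lie in `Γ` is `c_p`-cyclically monotone. -/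
theorem cpCyclicallyMonotone_intermediate
    {M : Type*} [MetricSpace M] (p : ℝ) (hp : 1 < p)
    (Γ : Set (M × M)) (hΓ : CpCyclicallyMonotone p Γ)
    (s t : ℝ) (hs : s ∈ Icc (0:ℝ) 1) (ht : t ∈ Icc (0:ℝ) 1) :
    CpCyclicallyMonotone p
      {z : M × M | ∃ γ : ℝ → M, IsGeodesicOn γ ∧ (γ 0, γ 1) ∈ Γ ∧ z = (γ s, γ t)} := by
  intro n f hf σ
  choose γ hγ hγΓ hfγ using hf
  have hp0 : 0 < p := zero_lt_one.trans hp
  have hℓ : ∀ i, 0 ≤ dist (γ i 0) (γ i 1) := fun i => dist_nonneg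
  have hd : ∀ i, 0 ≤ dist (γ i s) (γ (σ i) t) := fun i => dist_nonneg
  simp only [hfγ, fun i => hγ i s hs t ht]
  rcases le_total s t with hst | hts
  · rw [abs_sub_comm, abs_of_nonneg (sub_nonneg.2 hst)]
    refine sum_mul_rpow_le_of_le_sum_add_rpow hp.le hℓ hd σ hs.1 (sub_nonneg.2 ht.2)
      (sub_nonneg.2 hst) (by ring) ((hΓ n _ hγΓ σ).trans (sum_le_sum fun i _ => ?_))
    exact Real.rpow_le_rpow dist_nonneg ((hγ i).dist_zero_one_le (hγ (σ i)) hs ht) hp0.le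
  · rw [abs_of_nonneg (sub_nonneg.2 hts)]
    refine sum_mul_rpow_le_of_le_sum_add_rpow hp.le hℓ hd σ (sub_nonneg.2 hs.2) ht.1
      (sub_nonneg.2 hts) (by ring)
      ((hΓ.sum_le_sum_perm_fst hγΓ σ).trans (sum_le_sum fun i _ => ?_))
    have hcost := (hγ (σ i)).dist_zero_one_le (hγ i) ht hs
    rw [dist_comm (γ (σ i) t)] at hcost
    exact Real.rpow_le_rpow dist_nonneg (by linarith) hp0.le
end

section
/- Let (M,d) be a metric space with a compact group G acting by isometries, quotient map p : M → M*, and quotient metric d*. For any function f : M* → ℝ with lift f̂(x) := f(p(x)), and any x ∈ M, the asymptotic Lipschitz constants satisfy Lip f̂(x) = Lip f(x*) and lip f̂(x) = lip f(x*), where Lip h(z) = limsup_{r→0} sup_{w ∈ B_r(z)} |h(w)−h(z)|/r and lip h(z) = liminf_{r→0} sup_{w ∈ B_r(z)} |h(w)−h(z)|/r. -/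
open Filter Set Metric

/-- The upper asymptotic Lipschitz constant
`Lip f(x) = limsup_{r→0⁺} sup_{y ∈ B_r(x)} |f y - f x| / r`. -/
noncomputable def upperAsympLip {X : Type*} [PseudoMetricSpace X] (f : X → ℝ) (x : X) : ℝ :=
  limsup (fun r : ℝ => ⨆ y ∈ ball x r, |f y - f x| / r) (nhdsWithin 0 (Ioi 0))

/-- The lower asymptotic Lipschitz constant
`lip f(x) = liminf_{r→0⁺} sup_{y ∈ B_r(x)} |f y - f x| / r`. -/
noncomputable def lowerAsympLip {X : Type*} [PseudoMetricSpace X] (f : X → ℝ) (x : X) : ℝ :=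
  liminf (fun r : ℝ => ⨆ y ∈ ball x r, |f y - f x| / r) (nhdsWithin 0 (Ioi 0))

/-- Let `(M,d)` be a metric space with a compact group `G` acting by
isometries, quotient map `pr : M → Q` onto the quotient metric space.  For any function
`f : Q → ℝ` with lift `f ∘ pr`, and any `x ∈ M`,
`Lip (f ∘ pr)(x) = Lip f(pr x)` and `lip (f ∘ pr)(x) = lip f(pr x)`. -/
theorem asympLip_lift
    {M : Type*} [MetricSpace M]
    {G : Type*} [Group G] [TopologicalSpace G] [CompactSpace G] [MulAction G M]
    (hcont : Continuous fun q : G × M => q.1 • q.2)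
    (hiso : ∀ (g : G) (x y : M), dist (g • x) (g • y) = dist x y)
    {Q : Type*} [MetricSpace Q] (pr : M → Q)
    (hsurj : Function.Surjective pr)
    (hfib : ∀ x y : M, pr x = pr y ↔ y ∈ MulAction.orbit G x)
    (hdist : ∀ x y : M, dist (pr x) (pr y) = ⨅ g : G, dist (g • x) y)
    (f : Q → ℝ) (x : M) :
    upperAsympLip (f ∘ pr) x = upperAsympLip f (pr x) ∧
      lowerAsympLip (f ∘ pr) x = lowerAsympLip f (pr x) := by
  -- `pr` maps `ball x r` into `ball (pr x) r`.
  have hmem : ∀ {r : ℝ} {y : M}, y ∈ ball x r → pr y ∈ ball (pr x) r := by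
    intro r y hy
    rw [mem_ball, dist_comm, hdist]
    refine lt_of_le_of_lt (ciInf_le ⟨0, ?_⟩ (1 : G)) ?_
    · rintro _ ⟨g, rfl⟩; exact dist_nonneg
    · rw [one_smul]; exact mem_ball'.mp hy
  -- every point of `ball (pr x) r` lifts to `ball x r`.
  have hlift : ∀ {r : ℝ} {q : Q}, q ∈ ball (pr x) r → ∃ y ∈ ball x r, pr y = q := by
    intro r q hq
    obtain ⟨z, rfl⟩ := hsurj q
    rw [mem_ball, dist_comm, hdist] at hq
    obtain ⟨g, hg⟩ := exists_lt_of_ciInf_lt hq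
    refine ⟨g⁻¹ • z, ?_, ?_⟩
    · rw [mem_ball, dist_comm]
      calc dist x (g⁻¹ • z) = dist (g • x) (g • g⁻¹ • z) := (hiso g _ _).symm
        _ = dist (g • x) z := by rw [smul_inv_smul]
        _ < r := hg
    · exact ((hfib z (g⁻¹ • z)).mpr ⟨g⁻¹, rfl⟩).symm
  -- the two sup-functions agree on `Ioi 0`.
  have key : ∀ r ∈ Ioi (0 : ℝ),
      (⨆ y ∈ ball x r, |(f ∘ pr) y - (f ∘ pr) x| / r)
        = ⨆ q ∈ ball (pr x) r, |f q - f (pr x)| / r := by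
    intro r hr
    apply csSup_eq_csSup_of_forall_exists_le
    · rintro _ ⟨y, rfl⟩
      by_cases hy : y ∈ ball x r
      · refine ⟨⨆ _ : pr y ∈ ball (pr x) r, |f (pr y) - f (pr x)| / r, ⟨pr y, rfl⟩, ?_⟩
        simp only [ciSup_pos hy, ciSup_pos (hmem hy)]
        exact le_refl _
      · refine ⟨⨆ _ : pr x ∈ ball (pr x) r, |f (pr x) - f (pr x)| / r, ⟨pr x, rfl⟩, ?_⟩
        simp only [ciSup_neg hy, Real.sSup_empty, ciSup_pos (mem_ball_self hr)]
        simp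
    · rintro _ ⟨q, rfl⟩
      by_cases hq : q ∈ ball (pr x) r
      · obtain ⟨y, hy, rfl⟩ := hlift hq
        refine ⟨⨆ _ : y ∈ ball x r, |(f ∘ pr) y - (f ∘ pr) x| / r, ⟨y, rfl⟩, ?_⟩
        simp only [ciSup_pos hq, ciSup_pos hy]
        exact le_refl _
      · refine ⟨⨆ _ : x ∈ ball x r, |(f ∘ pr) x - (f ∘ pr) x| / r, ⟨x, rfl⟩, ?_⟩
        simp only [ciSup_neg hq, Real.sSup_empty, ciSup_pos (mem_ball_self hr)]
        simp
  have hev : (fun r : ℝ => ⨆ y ∈ ball x r, |(f ∘ pr) y - (f ∘ pr) x| / r)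
      =ᶠ[nhdsWithin 0 (Ioi 0)]
      fun r : ℝ => ⨆ q ∈ ball (pr x) r, |f q - f (pr x)| / r :=
    eventually_mem_nhdsWithin.mono key
  exact ⟨limsup_congr hev, liminf_congr hev⟩
end

section
/- Let (M,d) be a geodesic metric space and f : M → ℝ a Lipschitz function. For r > 0 define f_r(x) := sup_{y ∈ B_r(x)} |f(y) − f(x)| / r, where B_r(x) is the open ball. Then f_r : M → ℝ is continuous. -/
open Set Metric

/-- Let `(M,d)` be a geodesic metric space and `f : M → ℝ` Lipschitz.
For `r > 0` define `f_r(x) = sup_{y ∈ B_r(x)} |f y - f x| / r` (open ball).  Then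
`f_r : M → ℝ` is continuous. -/
theorem fr_continuous
    {M : Type*} [MetricSpace M]
    (hgeo : ∀ a b : M, ∃ γ : ℝ → M, γ 0 = a ∧ γ 1 = b ∧ IsGeodesicOn γ)
    (f : M → ℝ) (L : NNReal) (hf : LipschitzWith L f)
    (r : ℝ) (hr : 0 < r) :
    Continuous fun x : M => ⨆ y ∈ ball x r, |f y - f x| / r := by
  have hL0 : (0:ℝ) ≤ L := L.coe_nonneg
  set C : ℝ := 3 * L / r with hC
  have hC0 : 0 ≤ C := by positivity
  set g : M → ℝ := fun x => ⨆ y ∈ ball x r, |f y - f x| / r with hg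
  have hfd : ∀ a b : M, |f a - f b| ≤ L * dist a b := by
    intro a b
    have := hf.dist_le_mul a b
    rwa [Real.dist_eq] at this
  have hterm : ∀ x y : M, (⨆ _ : y ∈ ball x r, |f y - f x| / r) ≤ L := by
    intro x y
    refine Real.iSup_le (fun h => ?_) hL0
    have hd : dist y x ≤ r := le_of_lt (mem_ball.mp h)
    have h1 : |f y - f x| ≤ L * r :=
      le_trans (hfd y x) (mul_le_mul_of_nonneg_left hd hL0)
    rw [div_le_iff₀ hr]
    linarith
  have hbdd : ∀ x : M, BddAbove (Set.range fun y => ⨆ _ : y ∈ ball x r, |f y - f x| / r) := by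
    intro x
    exact ⟨L, by rintro _ ⟨y, rfl⟩; exact hterm x y⟩
  have hFx : ∀ (x y : M), y ∈ ball x r →
      (⨆ _ : y ∈ ball x r, |f y - f x| / r) = |f y - f x| / r := by
    intro x y h
    haveI : Nonempty (y ∈ ball x r) := ⟨h⟩
    exact ciSup_const
  have hle_g : ∀ (x y : M), y ∈ ball x r → |f y - f x| / r ≤ g x := by
    intro x y h
    have := le_ciSup (hbdd x) y
    rwa [hFx x y h] at this
  have hg0 : ∀ x : M, 0 ≤ g x := by
    intro x
    have := hle_g x x (mem_ball_self hr)
    simpa using this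
  have key : ∀ x x' : M, g x' ≤ g x + C * dist x' x := by
    intro x x'
    set δ : ℝ := dist x' x with hδ
    have hδ0 : 0 ≤ δ := dist_nonneg
    have hrhs0 : 0 ≤ g x + C * δ := add_nonneg (hg0 x) (mul_nonneg hC0 hδ0)
    refine Real.iSup_le (fun y => ?_) hrhs0
    refine Real.iSup_le (fun hy => ?_) hrhs0
    have hyd : dist y x' < r := mem_ball.mp hy
    by_cases hsmall : δ < r / 3
    · obtain ⟨γ, hγ0, hγ1, hγ⟩ := hgeo x' y
      set t : ℝ := 1 - 2 * δ / r with ht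
      have hq0 : 0 ≤ 2 * δ / r := by positivity
      have hq : 2 * δ / r < 2 / 3 := by
        rw [div_lt_iff₀ hr]; linarith
      have ht0 : (0:ℝ) < t := by rw [ht]; linarith
      have ht1 : t ≤ 1 := by rw [ht]; linarith
      have hdxy : dist x' y = dist y x' := dist_comm _ _
      have hdz : dist (γ t) x' = t * dist x' y := by
        have h := hγ t ⟨le_of_lt ht0, ht1⟩ 0 ⟨le_refl 0, zero_le_one⟩
        rw [hγ0, hγ1] at h
        rw [h, sub_zero, abs_of_nonneg (le_of_lt ht0)]
      have hdyz : dist y (γ t) = (2 * δ / r) * dist x' y := by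
        have h := hγ 1 ⟨zero_le_one, le_refl 1⟩ t ⟨le_of_lt ht0, ht1⟩
        rw [hγ0, hγ1] at h
        rw [h]
        congr 1
        rw [abs_of_nonneg (by linarith : (0:ℝ) ≤ 1 - t), ht]
        ring
      have hzball : γ t ∈ ball x r := by
        rw [mem_ball]
        have h1 : dist (γ t) x ≤ dist (γ t) x' + δ := dist_triangle _ _ _
        have h2 : t * dist x' y < t * r := by
          apply mul_lt_mul_of_pos_left _ ht0
          rw [hdxy]; exact hyd
        have h3 : t * r = r - 2 * δ := by
          rw [ht]; field_simp
        rw [hdz] at h1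
        linarith
      have hyz : |f y - f (γ t)| ≤ 2 * L * δ := by
        refine le_trans (hfd y (γ t)) ?_
        rw [hdyz]
        have hd1 : dist x' y ≤ r := by rw [hdxy]; exact le_of_lt hyd
        have : (L:ℝ) * (2 * δ / r * dist x' y) ≤ L * (2 * δ / r * r) := by
          apply mul_le_mul_of_nonneg_left _ hL0
          exact mul_le_mul_of_nonneg_left hd1 hq0
        have heq : (L:ℝ) * (2 * δ / r * r) = 2 * L * δ := by
          field_simp
        linarith
      have hxx' : |f x - f x'| ≤ L * δ := by
        have := hfd x x'
        rwa [dist_comm x x'] at this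
      have htri : |f y - f x'| ≤ |f y - f (γ t)| + |f (γ t) - f x| + |f x - f x'| := by
        have h1 : |f y - f x'| ≤ |f y - f x| + |f x - f x'| := abs_sub_le _ _ _
        have h2 : |f y - f x| ≤ |f y - f (γ t)| + |f (γ t) - f x| := abs_sub_le _ _ _
        linarith
      have hzg : |f (γ t) - f x| / r ≤ g x := hle_g x (γ t) hzball
      have hfin : |f y - f x'| ≤ |f (γ t) - f x| + 3 * L * δ := by linarith
      have h4 : |f y - f x'| / r ≤ |f (γ t) - f x| / r + 3 * L * δ / r := by
        rw [← add_div]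
        exact div_le_div_of_nonneg_right hfin hr.le
      have h5 : 3 * (L:ℝ) * δ / r = C * δ := by rw [hC]; ring
      linarith
    · push_neg at hsmall
      have h1 : |f y - f x'| / r ≤ L := by
        have h2 : |f y - f x'| ≤ L * r :=
          le_trans (hfd y x') (mul_le_mul_of_nonneg_left (le_of_lt hyd) hL0)
        rw [div_le_iff₀ hr]; linarith
      have h2 : (L:ℝ) ≤ C * δ := by
        rw [hC]
        rw [div_mul_eq_mul_div, le_div_iff₀ hr]
        nlinarith
      linarith [hg0 x]
  have hdistle : ∀ a b : M, dist (g a) (g b) ≤ C * dist a b := by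
    intro a b
    rw [Real.dist_eq, abs_sub_le_iff]
    constructor
    · linarith [key b a]
    · rw [dist_comm a b]
      linarith [key a b]
  have hlip : LipschitzWith (Real.toNNReal C) g := by
    apply LipschitzWith.of_dist_le_mul
    intro a b
    rw [Real.coe_toNNReal C hC0]
    exact hdistle a b
  exact hlip.continuous
end

section
/- Let (M,d) be a geodesic metric space and G a compact group acting on M by isometries, with Haar probability measure ν_G, such that for each fixed x the map g ↦ gx is continuous. For a Lipschitz function f : M → ℝ define its G-average f_{(G)}(x) := ∫_G f(gx) dν_G(g). Then for every q ∈ [1,∞) and every x ∈ M, (Lip f_{(G)}(x))^q ≤ ∫_G (Lip f(gx))^q dν_G(g). In particular f_{(G)} is Lipschitz continuous. -/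
/-!
For a Lipschitz `f`, the difference quotients `ballSlope f r` are lower semicontinuous and bounded,
hence integrable along orbits, and averaging over `G` gives, since `G` acts by isometries,
`ballSlope f_G r x ≤ ∫ ballSlope f r (g • x) dν(g)`. Passing to `r → 0⁺` through the monotone
envelopes `ballSlopeUpTo f δ = sup_{0 < r < δ} ballSlope f r`, dominated convergence gives
`Lip f_G (x) ≤ ∫ Lip f (g • x) dν(g)`, and Jensen's inequality for `t ↦ t ^ q` concludes.
-/

open MeasureTheory Filter Set Metric

open Topology

lemma Real.exists_lt_of_nonneg_of_lt_iSup {ι : Sort*} {f : ι → ℝ} {a : ℝ} (ha : 0 ≤ a)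
    (h : a < ⨆ i, f i) : ∃ i, a < f i := by
  by_contra! H
  exact h.not_ge (Real.iSup_le H ha)

lemma LowerSemicontinuous.comp_continuous {α β γ : Type*} [TopologicalSpace α]
    [TopologicalSpace β] [Preorder γ] {φ : β → γ} {c : α → β} (hφ : LowerSemicontinuous φ)
    (hc : Continuous c) : LowerSemicontinuous (φ ∘ c) :=
  fun a _ ha => (hc.tendsto a).eventually (hφ (c a) _ ha)

lemma Real.rpow_integral_le_integral_rpow {α : Type*} [MeasurableSpace α] {μ : Measure α}
    [IsProbabilityMeasure μ] {φ : α → ℝ} {q C : ℝ} (hq : 1 ≤ q)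
    (hφ : AEStronglyMeasurable φ μ) (hφ0 : ∀ a, 0 ≤ φ a) (hφC : ∀ a, φ a ≤ C) :
    (∫ a, φ a ∂μ) ^ q ≤ ∫ a, φ a ^ q ∂μ := by
  have hq0 : 0 ≤ q := zero_le_one.trans hq
  have hint : Integrable φ μ :=
    .of_bound hφ C (ae_of_all _ fun a => by rw [Real.norm_of_nonneg (hφ0 a)]; exact hφC a)
  have hintq : Integrable (fun a => φ a ^ q) μ := by
    refine .of_bound ((Real.continuous_rpow_const hq0).comp_aestronglyMeasurable hφ) (C ^ q)
      (ae_of_all _ fun a => ?_)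
    rw [Real.norm_of_nonneg (Real.rpow_nonneg (hφ0 a) q)]
    exact Real.rpow_le_rpow (hφ0 a) (hφC a) hq0
  exact (convexOn_rpow hq).map_integral_le (Real.continuous_rpow_const hq0).continuousOn
    isClosed_Ici (ae_of_all _ hφ0) hint hintq

section BallSlope

variable {X : Type*} [PseudoMetricSpace X] {f : X → ℝ} {L : NNReal} {r δ c : ℝ} {x y : X}

noncomputable def ballSlope (f : X → ℝ) (r : ℝ) (x : X) : ℝ :=
  ⨆ y ∈ ball x r, |f y - f x| / r

noncomputable def ballSlopeUpTo (f : X → ℝ) (δ : ℝ) (x : X) : ℝ :=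
  ⨆ r : Ioo (0 : ℝ) δ, ballSlope f r x

lemma upperAsympLip_eq_limsup_ballSlope (f : X → ℝ) (x : X) :
    upperAsympLip f x = limsup (fun r => ballSlope f r x) (𝓝[>] 0) :=
  rfl

lemma ballSlope_nonneg : 0 ≤ ballSlope f r x :=
  Real.iSup_nonneg fun _ => Real.iSup_nonneg fun hy =>
    div_nonneg (abs_nonneg _) (dist_nonneg.trans (mem_ball.1 hy).le)

lemma LipschitzWith.abs_sub_div_le_of_mem_ball (hf : LipschitzWith L f) (hy : y ∈ ball x r) :
    |f y - f x| / r ≤ L := by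
  have hyx : dist y x < r := mem_ball.1 hy
  refine div_le_of_le_mul₀ (dist_nonneg.trans hyx.le) L.coe_nonneg ?_
  calc |f y - f x| = dist (f y) (f x) := (Real.dist_eq _ _).symm
    _ ≤ L * dist y x := hf.dist_le_mul y x
    _ ≤ L * r := by gcongr

lemma ballSlope_le (hf : LipschitzWith L f) : ballSlope f r x ≤ L :=
  Real.iSup_le (fun _ => Real.iSup_le (fun hy => hf.abs_sub_div_le_of_mem_ball hy) L.coe_nonneg)
    L.coe_nonneg

lemma abs_sub_div_le_ballSlope (hf : LipschitzWith L f) (hy : y ∈ ball x r) :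
    |f y - f x| / r ≤ ballSlope f r x := by
  have hbdd : BddAbove (range fun y => ⨆ _ : y ∈ ball x r, |f y - f x| / r) :=
    ⟨L, forall_mem_range.2 fun _ =>
      Real.iSup_le (fun hy => hf.abs_sub_div_le_of_mem_ball hy) L.coe_nonneg⟩
  have hle := le_ciSup hbdd y
  rwa [ciSup_pos hy] at hle

lemma lowerSemicontinuous_ballSlope (hf : LipschitzWith L f) (r : ℝ) :
    LowerSemicontinuous (ballSlope f r) := by
  intro x c hc
  rcases lt_or_ge c 0 with hc0 | hc0
  · exact Eventually.of_forall fun _ => hc0.trans_le ballSlope_nonneg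
  obtain ⟨y, hy⟩ := Real.exists_lt_of_nonneg_of_lt_iSup hc0 hc
  obtain ⟨hyx, hcy⟩ := Real.exists_lt_of_nonneg_of_lt_iSup hc0 hy
  have hnear : ∀ᶠ x' in 𝓝 x, dist y x' < r :=
    (continuous_const.dist continuous_id).continuousAt.eventually_lt continuousAt_const hyx
  have hlarge : ∀ᶠ x' in 𝓝 x, c < |f y - f x'| / r :=
    continuousAt_const.eventually_lt
      ((continuous_const.sub hf.continuous).abs.div_const r).continuousAt hcy
  filter_upwards [hnear, hlarge] with x' hx' hcx'
  exact hcx'.trans_le (abs_sub_div_le_ballSlope hf hx')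

lemma ballSlopeUpTo_nonneg : 0 ≤ ballSlopeUpTo f δ x :=
  Real.iSup_nonneg fun _ => ballSlope_nonneg

lemma ballSlopeUpTo_le (hf : LipschitzWith L f) : ballSlopeUpTo f δ x ≤ L :=
  Real.iSup_le (fun _ => ballSlope_le hf) L.coe_nonneg

lemma ballSlope_le_ballSlopeUpTo (hf : LipschitzWith L f) (hr : r ∈ Ioo 0 δ) :
    ballSlope f r x ≤ ballSlopeUpTo f δ x :=
  le_ciSup (f := fun r : Ioo (0 : ℝ) δ => ballSlope f r x)
    ⟨L, forall_mem_range.2 fun _ => ballSlope_le hf⟩ ⟨r, hr⟩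

lemma monotone_ballSlopeUpTo (hf : LipschitzWith L f) (x : X) :
    Monotone fun δ => ballSlopeUpTo f δ x := fun _ _ hδ =>
  Real.iSup_le (fun r => ballSlope_le_ballSlopeUpTo hf ⟨r.2.1, r.2.2.trans_le hδ⟩)
    ballSlopeUpTo_nonneg

lemma lowerSemicontinuous_ballSlopeUpTo (hf : LipschitzWith L f) (δ : ℝ) :
    LowerSemicontinuous (ballSlopeUpTo f δ) :=
  lowerSemicontinuous_ciSup (fun _ => ⟨L, forall_mem_range.2 fun _ => ballSlope_le hf⟩)
    fun r => lowerSemicontinuous_ballSlope hf r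

lemma upperAsympLip_le_of_eventually_le (h : ∀ᶠ r in 𝓝[>] 0, ballSlope f r x ≤ c) :
    upperAsympLip f x ≤ c := by
  rw [upperAsympLip_eq_limsup_ballSlope]
  exact limsup_le_of_le (isCoboundedUnder_le_of_le _ fun _ => ballSlope_nonneg) h

lemma upperAsympLip_le (hf : LipschitzWith L f) (x : X) : upperAsympLip f x ≤ L :=
  upperAsympLip_le_of_eventually_le (Eventually.of_forall fun _ => ballSlope_le hf)

lemma isBoundedUnder_ballSlope (hf : LipschitzWith L f) (x : X) :
    IsBoundedUnder (· ≤ ·) (𝓝[>] 0) fun r => ballSlope f r x :=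
  isBoundedUnder_of ⟨L, fun _ => ballSlope_le hf⟩

lemma upperAsympLip_nonneg (hf : LipschitzWith L f) (x : X) : 0 ≤ upperAsympLip f x := by
  rw [upperAsympLip_eq_limsup_ballSlope]
  exact le_limsup_of_frequently_le (Frequently.of_forall fun _ => ballSlope_nonneg)
    (isBoundedUnder_ballSlope hf x)

lemma upperAsympLip_le_ballSlopeUpTo (hf : LipschitzWith L f) (hδ : 0 < δ) :
    upperAsympLip f x ≤ ballSlopeUpTo f δ x :=
  upperAsympLip_le_of_eventually_le <| by
    filter_upwards [Ioo_mem_nhdsGT hδ] with r hr using ballSlope_le_ballSlopeUpTo hf hr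

lemma exists_ballSlopeUpTo_le (hf : LipschitzWith L f) (hc : upperAsympLip f x < c) :
    ∃ δ > 0, ballSlopeUpTo f δ x ≤ c := by
  have hsmall := eventually_lt_of_limsup_lt hc (isBoundedUnder_ballSlope hf x)
  obtain ⟨δ, hδ, hsub⟩ := mem_nhdsGT_iff_exists_Ioo_subset.1 hsmall
  have hc0 : 0 ≤ c := (upperAsympLip_nonneg hf x).trans hc.le
  exact ⟨δ, hδ, Real.iSup_le (fun r => (hsub r.2).le) hc0⟩

lemma tendsto_ballSlopeUpTo_upperAsympLip (hf : LipschitzWith L f) (x : X) :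
    Tendsto (fun δ => ballSlopeUpTo f δ x) (𝓝[>] 0) (𝓝 (upperAsympLip f x)) := by
  refine tendsto_order.2 ⟨fun a ha => ?_, fun c hc => ?_⟩
  · filter_upwards [self_mem_nhdsWithin] with δ hδ
    exact ha.trans_le (upperAsympLip_le_ballSlopeUpTo hf hδ)
  · obtain ⟨c', hc', hc'c⟩ := exists_between hc
    obtain ⟨δ₀, hδ₀, hle⟩ := exists_ballSlopeUpTo_le hf hc'
    filter_upwards [Ioo_mem_nhdsGT hδ₀] with δ hδ
    exact ((monotone_ballSlopeUpTo hf x hδ.2.le).trans hle).trans_lt hc'c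

end BallSlope

noncomputable def orbitAverage {G M : Type*} [MeasurableSpace G] [SMul G M] (ν : Measure G)
    (f : M → ℝ) (x : M) : ℝ :=
  ∫ g, f (g • x) ∂ν

section OrbitAverage

variable {G M : Type*} [TopologicalSpace G] [MeasurableSpace G] [OpensMeasurableSpace G]
  [PseudoMetricSpace M] [SMul G M] {ν : Measure G} [IsFiniteMeasure ν] {f : M → ℝ} {L : NNReal}

lemma integrable_comp_smul_of_continuous [CompactSpace G]
    (hcont : ∀ x : M, Continuous fun g : G => g • x) (hf : Continuous f) (x : M) :
    Integrable (fun g => f (g • x)) ν :=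
  (hf.comp (hcont x)).integrable_of_hasCompactSupport (.of_compactSpace _)

lemma integrable_comp_smul_of_lowerSemicontinuous
    (hcont : ∀ x : M, Continuous fun g : G => g • x) {φ : M → ℝ} {C : ℝ}
    (hφ : LowerSemicontinuous φ) (hφ0 : ∀ y, 0 ≤ φ y) (hφC : ∀ y, φ y ≤ C) (x : M) :
    Integrable (fun g => φ (g • x)) ν :=
  .of_bound (hφ.comp_continuous (hcont x)).measurable.aestronglyMeasurable C
    (ae_of_all _ fun g => by rw [Real.norm_of_nonneg (hφ0 _)]; exact hφC _)

lemma integrable_ballSlope_comp_smul (hcont : ∀ x : M, Continuous fun g : G => g • x)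
    (hf : LipschitzWith L f) (r : ℝ) (x : M) : Integrable (fun g => ballSlope f r (g • x)) ν :=
  integrable_comp_smul_of_lowerSemicontinuous hcont (lowerSemicontinuous_ballSlope hf r)
    (fun _ => ballSlope_nonneg) (fun _ => ballSlope_le hf) x

lemma integrable_ballSlopeUpTo_comp_smul (hcont : ∀ x : M, Continuous fun g : G => g • x)
    (hf : LipschitzWith L f) (δ : ℝ) (x : M) :
    Integrable (fun g => ballSlopeUpTo f δ (g • x)) ν :=
  integrable_comp_smul_of_lowerSemicontinuous hcont (lowerSemicontinuous_ballSlopeUpTo hf δ)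
    (fun _ => ballSlopeUpTo_nonneg) (fun _ => ballSlopeUpTo_le hf) x

lemma tendsto_integral_ballSlopeUpTo
    (hcont : ∀ x : M, Continuous fun g : G => g • x) (hf : LipschitzWith L f) (x : M) :
    Tendsto (fun δ => ∫ g, ballSlopeUpTo f δ (g • x) ∂ν) (𝓝[>] 0)
      (𝓝 (∫ g, upperAsympLip f (g • x) ∂ν)) :=
  tendsto_integral_filter_of_dominated_convergence (fun _ => (L : ℝ))
    (Eventually.of_forall fun δ =>
      (integrable_ballSlopeUpTo_comp_smul hcont hf δ x).aestronglyMeasurable)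
    (Eventually.of_forall fun _ => ae_of_all _ fun _ => by
      rw [Real.norm_of_nonneg ballSlopeUpTo_nonneg]; exact ballSlopeUpTo_le hf)
    (integrable_const _)
    (ae_of_all _ fun g => tendsto_ballSlopeUpTo_upperAsympLip hf (g • x))

lemma aestronglyMeasurable_upperAsympLip_comp_smul
    (hcont : ∀ x : M, Continuous fun g : G => g • x) (hf : LipschitzWith L f) (x : M) :
    AEStronglyMeasurable (fun g => upperAsympLip f (g • x)) ν :=
  aestronglyMeasurable_of_tendsto_ae (𝓝[>] 0)
    (fun δ => (integrable_ballSlopeUpTo_comp_smul hcont hf δ x).aestronglyMeasurable)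
    (ae_of_all _ fun g => tendsto_ballSlopeUpTo_upperAsympLip hf (g • x))

variable [CompactSpace G]

lemma abs_orbitAverage_sub_le
    (hcont : ∀ x : M, Continuous fun g : G => g • x) (hf : Continuous f) (x y : M) :
    |orbitAverage ν f y - orbitAverage ν f x| ≤ ∫ g, |f (g • y) - f (g • x)| ∂ν := by
  rw [orbitAverage, orbitAverage, ← integral_sub (integrable_comp_smul_of_continuous hcont hf y)
    (integrable_comp_smul_of_continuous hcont hf x)]
  exact abs_integral_le_integral_abs

variable [IsIsometricSMul G M]

lemma lipschitzWith_orbitAverage [IsProbabilityMeasure ν]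
    (hcont : ∀ x : M, Continuous fun g : G => g • x) (hf : LipschitzWith L f) :
    LipschitzWith L (orbitAverage ν f) := by
  refine LipschitzWith.of_dist_le_mul fun y x => ?_
  have hint := ((integrable_comp_smul_of_continuous (ν := ν) hcont hf.continuous y).sub
    (integrable_comp_smul_of_continuous hcont hf.continuous x)).abs
  calc dist (orbitAverage ν f y) (orbitAverage ν f x)
      ≤ ∫ g, |f (g • y) - f (g • x)| ∂ν :=
        (Real.dist_eq _ _).trans_le (abs_orbitAverage_sub_le hcont hf.continuous x y)
    _ ≤ ∫ _, L * dist y x ∂ν := by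
        refine integral_mono hint (integrable_const _) fun g => ?_
        rw [← Real.dist_eq, ← dist_smul g y x]
        exact hf.dist_le_mul _ _
    _ = L * dist y x := by simp

lemma ballSlope_orbitAverage_le
    (hcont : ∀ x : M, Continuous fun g : G => g • x) (hf : LipschitzWith L f) (r : ℝ) (x : M) :
    ballSlope (orbitAverage ν f) r x ≤ ∫ g, ballSlope f r (g • x) ∂ν := by
  have h0 : 0 ≤ ∫ g, ballSlope f r (g • x) ∂ν := integral_nonneg fun _ => ballSlope_nonneg
  refine Real.iSup_le (fun y => Real.iSup_le (fun hy => ?_) h0) h0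
  have hint := ((integrable_comp_smul_of_continuous (ν := ν) hcont hf.continuous y).sub
    (integrable_comp_smul_of_continuous hcont hf.continuous x)).abs.div_const r
  calc |orbitAverage ν f y - orbitAverage ν f x| / r
      ≤ (∫ g, |f (g • y) - f (g • x)| ∂ν) / r := by
        gcongr
        · exact dist_nonneg.trans (mem_ball.1 hy).le
        · exact abs_orbitAverage_sub_le hcont hf.continuous x y
    _ = ∫ g, |f (g • y) - f (g • x)| / r ∂ν := (integral_div r _).symm
    _ ≤ ∫ g, ballSlope f r (g • x) ∂ν := by
        refine integral_mono hint (integrable_ballSlope_comp_smul hcont hf r x) fun g =>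
          abs_sub_div_le_ballSlope hf ?_
        rw [mem_ball, dist_smul]
        exact hy

lemma upperAsympLip_orbitAverage_le
    (hcont : ∀ x : M, Continuous fun g : G => g • x) (hf : LipschitzWith L f) (x : M) :
    upperAsympLip (orbitAverage ν f) x ≤ ∫ g, upperAsympLip f (g • x) ∂ν := by
  have hbound : ∀ δ > 0,
      upperAsympLip (orbitAverage ν f) x ≤ ∫ g, ballSlopeUpTo f δ (g • x) ∂ν := by
    intro δ hδ
    refine upperAsympLip_le_of_eventually_le ?_
    filter_upwards [Ioo_mem_nhdsGT hδ] with r hr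
    exact (ballSlope_orbitAverage_le hcont hf r x).trans <|
      integral_mono (integrable_ballSlope_comp_smul hcont hf r x)
        (integrable_ballSlopeUpTo_comp_smul hcont hf δ x) fun _ =>
          ballSlope_le_ballSlopeUpTo hf hr
  exact ge_of_tendsto (tendsto_integral_ballSlopeUpTo hcont hf x)
    (eventually_mem_nhdsWithin.mono hbound)

end OrbitAverage

theorem gAverage_asympLip_bound_general
    {M : Type*} [MetricSpace M]
    {G : Type*} [Group G] [TopologicalSpace G] [CompactSpace G]
    [MeasurableSpace G] [BorelSpace G] [MulAction G M]
    (hcont : ∀ x : M, Continuous fun g : G => g • x)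
    (hiso : ∀ (g : G) (x y : M), dist (g • x) (g • y) = dist x y)
    (νG : Measure G) [IsProbabilityMeasure νG]
    (f : M → ℝ) (L : NNReal) (hf : LipschitzWith L f)
    (q : ℝ) (hq : 1 ≤ q) :
    (∀ x : M,
      upperAsympLip (fun z => ∫ g, f (g • z) ∂νG) x ^ q
        ≤ ∫ g, upperAsympLip f (g • x) ^ q ∂νG) ∧
    ∃ C : NNReal, LipschitzWith C fun z => ∫ g, f (g • z) ∂νG := by
  have : IsIsometricSMul G M := ⟨fun g => Isometry.of_dist_eq (hiso g)⟩
  have hLip : LipschitzWith L (orbitAverage νG f) := lipschitzWith_orbitAverage hcont hf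
  refine ⟨fun x => ?_, L, hLip⟩
  calc upperAsympLip (orbitAverage νG f) x ^ q
      ≤ (∫ g, upperAsympLip f (g • x) ∂νG) ^ q :=
        Real.rpow_le_rpow (upperAsympLip_nonneg hLip x)
          (upperAsympLip_orbitAverage_le hcont hf x) (zero_le_one.trans hq)
    _ ≤ ∫ g, upperAsympLip f (g • x) ^ q ∂νG :=
        Real.rpow_integral_le_integral_rpow hq
          (aestronglyMeasurable_upperAsympLip_comp_smul hcont hf x)
          (fun _ => upperAsympLip_nonneg hf _) (fun _ => upperAsympLip_le hf _)

/-- Let `(M,d)` be a geodesic metric space, `G` a compact group acting by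
isometries with Haar probability measure `νG` and continuous orbit maps.  For a Lipschitz
`f : M → ℝ`, the `G`-average `f_G(x) = ∫_G f (g • x) dνG(g)` satisfies, for every
`q ∈ [1,∞)` and every `x`, `(Lip f_G (x))^q ≤ ∫_G (Lip f (g • x))^q dνG(g)`;
in particular `f_G` is Lipschitz continuous. -/
theorem gAverage_asympLip_bound
    {M : Type*} [MetricSpace M]
    (hgeo : ∀ a b : M, ∃ γ : ℝ → M, γ 0 = a ∧ γ 1 = b ∧
      ∀ s ∈ Icc (0:ℝ) 1, ∀ t ∈ Icc (0:ℝ) 1, dist (γ s) (γ t) = |s - t| * dist a b)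
    {G : Type*} [Group G] [TopologicalSpace G] [IsTopologicalGroup G] [CompactSpace G]
    [MeasurableSpace G] [BorelSpace G] [MulAction G M]
    (hcont : ∀ x : M, Continuous fun g : G => g • x)
    (hiso : ∀ (g : G) (x y : M), dist (g • x) (g • y) = dist x y)
    (νG : Measure G) [IsProbabilityMeasure νG] [νG.IsMulLeftInvariant]
    (f : M → ℝ) (L : NNReal) (hf : LipschitzWith L f)
    (q : ℝ) (hq : 1 ≤ q) :
    (∀ x : M,
      upperAsympLip (fun z => ∫ g, f (g • z) ∂νG) x ^ q
        ≤ ∫ g, upperAsympLip f (g • x) ^ q ∂νG) ∧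
    ∃ C : NNReal, LipschitzWith C fun z => ∫ g, f (g • z) ∂νG :=
  gAverage_asympLip_bound_general hcont hiso νG f L hf q hq
end

section
/- Let (M,d) be a separable complete metric space with a Markov chain μ_{(·)} : M → P₁(M) having coarse Ricci curvature bounded below by k ∈ ℝ in the sense of Ollivier, i.e. W₁(μ_x, μ_y) ≤ (1−k)·d(x,y) for all x,y ∈ M. Let G be a compact group acting isometrically on M with Haar measure ν_G, quotient map p : M → M*, and define the quotient Markov chain μ̌_{x*} := ∫_G p_♯ μ_{gx} dν_G(g). Then (M*, d*, μ̌_{(·)}) has coarse Ricci curvature bounded below by k: W₁(μ̌_{x*}, μ̌_{y*}) ≤ (1−k)·d*(x*,y*). -/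
open MeasureTheory Filter Set
open scoped ENNReal

def FinMoment (p : ℝ) {X : Type*} [PseudoMetricSpace X] [MeasurableSpace X]
    (μ : Measure X) : Prop :=
  ∃ x₀ : X, (∫⁻ x, ENNReal.ofReal (dist x x₀ ^ p) ∂μ) ≠ ∞

/-! Choose `g₀` with `d*(x*, y*) = d(g₀ x, y)`; this is possible because `G` is compact. Since the
quotient map is 1-Lipschitz and `G` acts by isometries, for every `g` the measures
`p♯ μ_{g g₀ x}` and `p♯ μ_{g y}` are within `W₁`-distance `(1 - k) d*(x*, y*)`, and `μ̌_{x*}`,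
`μ̌_{y*}` are their `ν_G`-mixtures. So it remains to prove that `W₁` is jointly convex under mixing.

This needs near-optimal couplings of the mixed measures, chosen measurably in `g`. Cut the
quotient into countably many small cells and, for each `g`, take the first nearly optimal
finitely supported rational sub-coupling of the cell masses in a fixed enumeration. Complete it
by coupling the residual masses independently, and spread the mass sent from one cell to another
as the product of the conditional measures on the two cells. The map `x ↦ μ_x` itself is
measurable because it is Lipschitz for `W₁`. -/

open scoped NNReal
open ProbabilityTheory TopologicalSpace

section Coupling

variable {X : Type*}

lemma transportCost_one [PseudoMetricSpace X] [MeasurableSpace X] (π : Measure (X × X)) :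
    transportCost 1 π = ∫⁻ z, edist z.1 z.2 ∂π := by
  simp only [transportCost, Real.rpow_one, edist_dist]

lemma Wp_one [PseudoMetricSpace X] [MeasurableSpace X] (μ ν : Measure X) :
    Wp 1 μ ν = minCost 1 μ ν := by
  simp [Wp]

lemma isCoupling_prod [MeasurableSpace X] (μ ν : Measure X) [IsProbabilityMeasure μ]
    [IsProbabilityMeasure ν] : IsCoupling (μ.prod ν) μ ν := by
  simp [IsCoupling, Measure.map_fst_prod, Measure.map_snd_prod]

lemma IsCoupling.map {Y : Type*} [MeasurableSpace X] [MeasurableSpace Y] {π : Measure (X × X)}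
    {μ ν : Measure X} (h : IsCoupling π μ ν) {f : X → Y} (hf : Measurable f) :
    IsCoupling (π.map (Prod.map f f)) (μ.map f) (ν.map f) := by
  constructor
  · rw [Measure.map_map measurable_fst (hf.prodMap hf), ← h.1, Measure.map_map hf measurable_fst]
    rfl
  · rw [Measure.map_map measurable_snd (hf.prodMap hf), ← h.2, Measure.map_map hf measurable_snd]
    rfl

lemma IsCoupling.measure_univ [MeasurableSpace X] {π : Measure (X × X)}
    {μ ν : Measure X} (h : IsCoupling π μ ν) : π univ = μ univ := by
  rw [← h.1, Measure.map_apply measurable_fst .univ, preimage_univ]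

lemma IsCoupling.bind {Ω : Type*} [MeasurableSpace Ω] [MeasurableSpace X] {ν : Measure Ω}
    {Θ : Ω → Measure (X × X)} {μ₁ μ₂ : Ω → Measure X} (hΘ : Measurable Θ)
    (hμ₁ : Measurable μ₁) (hμ₂ : Measurable μ₂) (h : ∀ ω, IsCoupling (Θ ω) (μ₁ ω) (μ₂ ω)) :
    IsCoupling (ν.bind Θ) (ν.bind μ₁) (ν.bind μ₂) := by
  constructor <;> ext s hs
  · rw [Measure.map_apply measurable_fst hs, Measure.bind_apply (measurable_fst hs)
      hΘ.aemeasurable, Measure.bind_apply hs hμ₁.aemeasurable]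
    exact lintegral_congr fun ω ↦ by rw [← (h ω).1, Measure.map_apply measurable_fst hs]
  · rw [Measure.map_apply measurable_snd hs, Measure.bind_apply (measurable_snd hs)
      hΘ.aemeasurable, Measure.bind_apply hs hμ₂.aemeasurable]
    exact lintegral_congr fun ω ↦ by rw [← (h ω).2, Measure.map_apply measurable_snd hs]

variable [PseudoMetricSpace X] [MeasurableSpace X] {μ ν : Measure X}

lemma minCost_le_lintegral_edist {π : Measure (X × X)} (h : IsCoupling π μ ν) :
    minCost 1 μ ν ≤ ∫⁻ z, edist z.1 z.2 ∂π :=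
  transportCost_one π ▸ iInf_le (fun π : {π // IsCoupling π μ ν} ↦ transportCost 1 π.1) ⟨π, h⟩

lemma exists_isCoupling_lintegral_edist_lt {c : ℝ≥0∞} (h : minCost 1 μ ν < c) :
    ∃ π, IsCoupling π μ ν ∧ ∫⁻ z, edist z.1 z.2 ∂π < c := by
  obtain ⟨⟨π, hπ⟩, hlt⟩ := iInf_lt_iff.mp h
  exact ⟨π, hπ, transportCost_one π ▸ hlt⟩

lemma minCost_map_le {Y : Type*} [PseudoMetricSpace Y] [MeasurableSpace Y] {f : X → Y}
    (hf : Measurable f) (hf₁ : LipschitzWith 1 f) (μ ν : Measure X) :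
    minCost 1 (μ.map f) (ν.map f) ≤ minCost 1 μ ν :=
  le_iInf fun π ↦ calc
    minCost 1 (μ.map f) (ν.map f) ≤ ∫⁻ z, edist z.1 z.2 ∂(π.1.map (Prod.map f f)) :=
      minCost_le_lintegral_edist (π.2.map hf)
    _ ≤ ∫⁻ z, edist (f z.1) (f z.2) ∂π.1 := lintegral_map_le _ _
    _ ≤ transportCost 1 π.1 := by
      rw [transportCost_one]
      exact lintegral_mono fun z ↦ by simpa using hf₁.edist_le_mul z.1 z.2

lemma lintegral_le_lintegral_add_mul_lintegral_edist {f : X → ℝ≥0∞} (hf : Measurable f)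
    {K : ℝ≥0∞} (hK : K ≠ ∞) (hfK : ∀ x y, f x ≤ f y + K * edist x y) {π : Measure (X × X)}
    (h : IsCoupling π μ ν) :
    ∫⁻ x, f x ∂μ ≤ ∫⁻ x, f x ∂ν + K * ∫⁻ z, edist z.1 z.2 ∂π := by
  rw [← h.1, ← h.2, lintegral_map hf measurable_fst, lintegral_map hf measurable_snd,
    ← lintegral_const_mul' K _ hK]
  exact (lintegral_mono fun z : X × X ↦ hfK z.1 z.2).trans_eq
    (lintegral_add_left (hf.comp measurable_snd) _)

lemma lintegral_le_lintegral_add_mul_minCost [IsProbabilityMeasure μ] [IsProbabilityMeasure ν]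
    {f : X → ℝ≥0∞} (hf : Measurable f) {K : ℝ≥0∞} (hK : K ≠ ∞)
    (hfK : ∀ x y, f x ≤ f y + K * edist x y) :
    ∫⁻ x, f x ∂μ ≤ ∫⁻ x, f x ∂ν + K * minCost 1 μ ν := by
  have : Nonempty {π // IsCoupling π μ ν} := ⟨⟨_, isCoupling_prod μ ν⟩⟩
  rw [minCost, ENNReal.mul_iInf fun h ↦ absurd h hK, ENNReal.add_iInf]
  refine le_iInf fun π ↦ ?_
  rw [transportCost_one]
  exact lintegral_le_lintegral_add_mul_lintegral_edist hf hK hfK π.2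

end Coupling

lemma LipschitzWith.coe_le_add_mul_edist {α : Type*} [PseudoEMetricSpace α] {K : ℝ≥0}
    {f : α → ℝ≥0} (hf : LipschitzWith K f) (x y : α) :
    (f x : ℝ≥0∞) ≤ f y + K * edist x y :=
  calc (f x : ℝ≥0∞) ≤ f y + edist (f x) (f y) := by
        rw [edist_nndist, ← ENNReal.coe_add]
        exact ENNReal.coe_le_coe.2 (NNReal.le_add_nndist _ _)
    _ ≤ f y + K * edist x y := by gcongr; exact hf.edist_le_mul x y

/-- Under this bound, integrals of thickened indicators against `μ y` are continuous in `y`; they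
converge to the measures of closed sets. -/
theorem measurable_of_minCost_le_mul_edist {X Y : Type*} [PseudoMetricSpace X] [MeasurableSpace X]
    [BorelSpace X] [PseudoEMetricSpace Y] [MeasurableSpace Y] [OpensMeasurableSpace Y]
    {μ : Y → Measure X} [∀ y, IsProbabilityMeasure (μ y)] {C : ℝ≥0∞} (hC : C ≠ ∞)
    (hμ : ∀ y y', minCost 1 (μ y) (μ y') ≤ C * edist y y') : Measurable μ := by
  refine .measure_of_isPiSystem_of_isProbabilityMeasure
    (BorelSpace.measurable_eq.trans borel_eq_generateFrom_isClosed) isPiSystem_isClosed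
    fun T hT ↦ ?_
  have hδ (n : ℕ) : (0 : ℝ) < 1 / (n + 1) := Nat.one_div_pos_of_nat
  refine ENNReal.measurable_of_tendsto (fun n ↦ ?_) (tendsto_pi_nhds.2 fun y ↦
    tendsto_lintegral_thickenedIndicator_of_isClosed (μ y) hT hδ
      tendsto_one_div_add_atTop_nhds_zero_nat)
  set K : ℝ≥0 := (1 / (n + 1 : ℝ)).toNNReal⁻¹
  have hf := lipschitzWith_thickenedIndicator (hδ n) T
  refine (continuous_of_le_add_edist (K * C) (by finiteness) fun y y' ↦ ?_).measurable
  calc _ ≤ _ + K * minCost 1 (μ y) (μ y') :=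
        lintegral_le_lintegral_add_mul_minCost (by fun_prop) ENNReal.coe_ne_top
          hf.coe_le_add_mul_edist
    _ ≤ _ + K * (C * edist y y') := by gcongr; exact hμ y y'
    _ = _ := by rw [mul_assoc]

lemma measurable_of_Wp_one_le {X : Type*} [PseudoMetricSpace X] [MeasurableSpace X]
    [BorelSpace X] {μ : X → Measure X} [∀ x, IsProbabilityMeasure (μ x)] {k : ℝ}
    (h : ∀ x y, Wp 1 (μ x) (μ y) ≤ ENNReal.ofReal ((1 - k) * dist x y)) : Measurable μ :=
  measurable_of_minCost_le_mul_edist ENNReal.ofReal_ne_top fun x y ↦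
    calc minCost 1 (μ x) (μ y) ≤ ENNReal.ofReal ((1 - k) * dist x y) := Wp_one (μ x) _ ▸ h x y
      _ ≤ ENNReal.ofReal (|1 - k| * dist x y) := by gcongr; exact le_abs_self _
      _ = ENNReal.ofReal |1 - k| * edist x y := by
        rw [ENNReal.ofReal_mul (abs_nonneg _), edist_dist]

section Moment

variable {X Y : Type*} [PseudoMetricSpace X] [MeasurableSpace X] {μ : Measure X}

lemma FinMoment.lintegral_edist_ne_top [IsFiniteMeasure μ] (h : FinMoment 1 μ) (x : X) :
    ∫⁻ y, edist y x ∂μ ≠ ∞ := by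
  obtain ⟨x₀, hx₀⟩ := h
  simp only [Real.rpow_one, ← edist_dist] at hx₀
  refine ne_top_of_le_ne_top ?_ (lintegral_mono fun y ↦ edist_triangle y x₀ x)
  rw [lintegral_add_right _ measurable_const, lintegral_const]
  finiteness

lemma FinMoment.map [PseudoMetricSpace Y] [MeasurableSpace Y] (h : FinMoment 1 μ) {f : X → Y}
    (hf : LipschitzWith 1 f) : FinMoment 1 (μ.map f) := by
  obtain ⟨x₀, hx₀⟩ := h
  refine ⟨f x₀, ne_top_of_le_ne_top hx₀ ((lintegral_map_le _ _).trans (lintegral_mono fun x ↦ ?_))⟩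
  simpa using ENNReal.ofReal_le_ofReal (hf.dist_le_mul x x₀)

end Moment

lemma tsum_measure_mul_le_lintegral_add {α ι : Type*} [MeasurableSpace α] [Countable ι]
    {μ : Measure α} {E : ι → Set α} (hE : ∀ i, MeasurableSet (E i))
    (hdisj : Pairwise (Function.onFun Disjoint E)) (hcover : ⋃ i, E i = univ)
    {f : α → ℝ≥0∞} {v : ι → ℝ≥0∞} {c : ℝ≥0∞} (hv : ∀ i, ∀ x ∈ E i, v i ≤ f x + c) :
    ∑' i, μ (E i) * v i ≤ ∫⁻ x, f x ∂μ + c * μ univ :=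
  calc ∑' i, μ (E i) * v i = ∑' i, ∫⁻ _ in E i, v i ∂μ := by simp [mul_comm]
    _ ≤ ∑' i, ∫⁻ x in E i, (f x + c) ∂μ :=
      ENNReal.tsum_le_tsum fun i ↦ setLIntegral_mono' (hE i) (hv i)
    _ = ∫⁻ x, f x ∂μ + c * μ univ := by
      rw [← lintegral_iUnion hE hdisj, hcover, setLIntegral_univ,
        lintegral_add_right _ measurable_const, lintegral_const]

structure CellPartition (Q : Type*) [PseudoEMetricSpace Q] [MeasurableSpace Q] (ε : ℝ≥0∞) where
  cell : ℕ → Set Q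
  center : ℕ → Q
  measurableSet_cell (n : ℕ) : MeasurableSet (cell n)
  pairwise_disjoint : Pairwise (Function.onFun Disjoint cell)
  iUnion_cell : ⋃ n, cell n = univ
  edist_center_le {n : ℕ} {q : Q} : q ∈ cell n → edist q (center n) ≤ ε

namespace CellPartition

variable {Q : Type*} [PseudoEMetricSpace Q] [MeasurableSpace Q] {ε : ℝ≥0∞}

theorem nonempty [OpensMeasurableSpace Q] [SeparableSpace Q] [Nonempty Q] (hε : ε ≠ 0) :
    Nonempty (CellPartition Q ε) := by
  let t := denseSeq Q
  refine ⟨⟨disjointed fun n ↦ Metric.eball (t n) ε, t,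
    MeasurableSet.disjointed fun _ ↦ measurableSet_eball, disjoint_disjointed _, ?_,
    fun hq ↦ (Metric.mem_eball.1 (disjointed_subset (fun n ↦ Metric.eball (t n) ε) _ hq)).le⟩⟩
  refine iUnion_disjointed.trans (eq_univ_of_forall fun q ↦ ?_)
  obtain ⟨n, hn⟩ := (denseRange_denseSeq Q).exists_mem_open Metric.isOpen_eball
    ⟨q, Metric.mem_eball_self (pos_iff_ne_zero.2 hε)⟩
  exact mem_iUnion.2 ⟨n, Metric.mem_eball_comm.1 hn⟩

variable (P : CellPartition Q ε)

lemma tsum_measure_cell (μ : Measure Q) : ∑' n, μ (P.cell n) = μ univ := by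
  rw [← measure_iUnion P.pairwise_disjoint P.measurableSet_cell, P.iUnion_cell]

lemma measurable_measure_cell {Ω : Type*} [MeasurableSpace Ω] {μ : Ω → Measure Q}
    (hμ : Measurable μ) (n : ℕ) : Measurable fun ω ↦ μ ω (P.cell n) :=
  (Measure.measurable_coe (P.measurableSet_cell n)).comp hμ

lemma pairwise_disjoint_prod :
    Pairwise (Function.onFun Disjoint fun p : ℕ × ℕ ↦ P.cell p.1 ×ˢ P.cell p.2) := by
  rintro ⟨i, j⟩ ⟨i', j'⟩ h
  rcases eq_or_ne i i' with rfl | hi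
  · exact disjoint_prod.2 (.inr (P.pairwise_disjoint fun hj ↦ h (by simp_all)))
  · exact disjoint_prod.2 (.inl (P.pairwise_disjoint hi))

lemma iUnion_prod_cell : ⋃ p : ℕ × ℕ, P.cell p.1 ×ˢ P.cell p.2 = univ := by
  rw [iUnion_prod, P.iUnion_cell, univ_prod_univ]

lemma tsum_measure_cell_mul_edist_le (μ : Measure Q) (q₀ : Q) :
    ∑' n, μ (P.cell n) * edist (P.center n) q₀ ≤ ∫⁻ q, edist q q₀ ∂μ + ε * μ univ :=
  tsum_measure_mul_le_lintegral_add P.measurableSet_cell P.pairwise_disjoint P.iUnion_cell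
    fun n q hq ↦ calc
      edist (P.center n) q₀ ≤ edist (P.center n) q + edist q q₀ := edist_triangle _ _ _
      _ ≤ edist q q₀ + ε := by
        rw [add_comm, edist_comm (P.center n)]; gcongr; exact P.edist_center_le hq

lemma tsum_measure_cell_prod_mul_edist_le (π : Measure (Q × Q)) :
    ∑' i, ∑' j, π (P.cell i ×ˢ P.cell j) * edist (P.center i) (P.center j) ≤
      ∫⁻ z, edist z.1 z.2 ∂π + 2 * ε * π univ := by
  rw [← ENNReal.tsum_prod]
  refine tsum_measure_mul_le_lintegral_add (fun p ↦ (P.measurableSet_cell _).prod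
    (P.measurableSet_cell _)) P.pairwise_disjoint_prod P.iUnion_prod_cell fun p z hz ↦ ?_
  have h₁ := P.edist_center_le hz.1
  have h₂ := P.edist_center_le hz.2
  calc edist (P.center p.1) (P.center p.2)
      ≤ edist (P.center p.1) z.1 + edist z.1 z.2 + edist z.2 (P.center p.2) :=
        edist_triangle4 _ _ _ _
    _ ≤ ε + edist z.1 z.2 + ε := by rw [edist_comm] at h₁; gcongr
    _ = edist z.1 z.2 + 2 * ε := by ring

lemma tsum_measure_prod_cell_right {π : Measure (Q × Q)} {μ : Measure Q}
    (h : π.map Prod.fst = μ) (i : ℕ) : ∑' j, π (P.cell i ×ˢ P.cell j) = μ (P.cell i) := by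
  rw [← measure_iUnion (fun j j' hj ↦ disjoint_prod.2 (.inr (P.pairwise_disjoint hj)))
      fun j ↦ (P.measurableSet_cell i).prod (P.measurableSet_cell j),
    ← prod_iUnion, P.iUnion_cell, prod_univ, ← h, Measure.map_apply measurable_fst
      (P.measurableSet_cell i)]

lemma tsum_measure_prod_cell_left {π : Measure (Q × Q)} {ν : Measure Q}
    (h : π.map Prod.snd = ν) (j : ℕ) : ∑' i, π (P.cell i ×ˢ P.cell j) = ν (P.cell j) := by
  rw [← measure_iUnion (fun i i' hi ↦ disjoint_prod.2 (.inl (P.pairwise_disjoint hi)))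
      fun i ↦ (P.measurableSet_cell i).prod (P.measurableSet_cell j),
    ← iUnion_prod_const, P.iUnion_cell, univ_prod, ← h, Measure.map_apply measurable_snd
      (P.measurableSet_cell j)]

end CellPartition

section MeasureValued

variable {Ω α β : Type*} [MeasurableSpace Ω] [MeasurableSpace α] [MeasurableSpace β]

lemma Measurable.cond_measure {μ : Ω → Measure α} (hμ : Measurable μ) {s : Set α}
    (hs : MeasurableSet s) : Measurable fun ω ↦ (μ ω)[|s] :=
  Measure.measurable_of_measurable_coe _ fun t ht ↦ by
    simp_rw [cond_apply hs]
    exact ((Measure.measurable_coe hs).comp hμ).inv.mul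
      ((Measure.measurable_coe (hs.inter ht)).comp hμ)

lemma Measurable.prod_measure {μ : Ω → Measure α} {ν : Ω → Measure β} (hμ : Measurable μ)
    (hν : Measurable ν) [∀ ω, IsFiniteMeasure (μ ω)] [∀ ω, IsFiniteMeasure (ν ω)] :
    Measurable fun ω ↦ (μ ω).prod (ν ω) :=
  FiniteMeasure.measurable_fun_prod.comp
    ((hμ.subtype_mk (p := IsFiniteMeasure) (h := fun _ ↦ inferInstance)).prodMk
      (hν.subtype_mk (p := IsFiniteMeasure) (h := fun _ ↦ inferInstance)))

lemma measure_smul_cond (μ : Measure α) {s : Set α} (hs : μ s ≠ ∞) :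
    μ s • μ[|s] = μ.restrict s := by
  rcases eq_or_ne (μ s) 0 with h | h
  · simp [h, Measure.restrict_eq_zero.2 h]
  · rw [ProbabilityTheory.cond, smul_smul, ENNReal.mul_inv_cancel h hs, one_smul]

lemma Measure.sum_smul_eq_tsum_smul {ι : Type*} (c : ι → ℝ≥0∞) (μ : Measure α) :
    Measure.sum (fun i ↦ c i • μ) = (∑' i, c i) • μ := by
  ext s hs
  simp [Measure.sum_apply _ hs, ENNReal.tsum_mul_right]

end MeasureValued

namespace CellPartition

variable {Q : Type*} [PseudoEMetricSpace Q] [MeasurableSpace Q] {ε : ℝ≥0∞}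
  (P : CellPartition Q ε)

lemma sum_smul_cond_cell (μ : Measure Q) [IsFiniteMeasure μ] :
    Measure.sum (fun i ↦ μ (P.cell i) • μ[|P.cell i]) = μ := by
  simp_rw [measure_smul_cond μ (measure_ne_top μ _)]
  rw [← Measure.restrict_iUnion P.pairwise_disjoint P.measurableSet_cell, P.iUnion_cell,
    Measure.restrict_univ]

noncomputable def glue (μ ν : Measure Q) (C : ℕ → ℕ → ℝ≥0∞) : Measure (Q × Q) :=
  Measure.sum fun i ↦ Measure.sum fun j ↦ C i j • (μ[|P.cell i]).prod (ν[|P.cell j])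

variable {μ ν : Measure Q} {C : ℕ → ℕ → ℝ≥0∞}

lemma cond_univ_mul_of_tsum_eq [IsFiniteMeasure μ] {a : ℕ → ℝ≥0∞} {n : ℕ}
    (h : ∑' m, a m = μ (P.cell n)) (m : ℕ) : a m * μ[|P.cell n] univ = a m := by
  rcases eq_or_ne (μ (P.cell n)) 0 with h₀ | h₀
  · simp [ENNReal.tsum_eq_zero.1 (h.trans h₀) m]
  · have := cond_isProbabilityMeasure (μ := μ) h₀
    simp

lemma isCoupling_glue [IsFiniteMeasure μ] [IsFiniteMeasure ν]
    (hrow : ∀ i, ∑' j, C i j = μ (P.cell i)) (hcol : ∀ j, ∑' i, C i j = ν (P.cell j)) :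
    IsCoupling (P.glue μ ν C) μ ν := by
  constructor
  · simp_rw [glue, Measure.map_sum measurable_fst.aemeasurable, Measure.map_smul,
      Measure.map_fst_prod, smul_smul]
    have h (i j : ℕ) := P.cond_univ_mul_of_tsum_eq (hcol j) i
    simp_rw [h, Measure.sum_smul_eq_tsum_smul, hrow, P.sum_smul_cond_cell]
  · simp_rw [glue, Measure.map_sum measurable_snd.aemeasurable, Measure.map_smul,
      Measure.map_snd_prod, smul_smul]
    have h (i j : ℕ) := P.cond_univ_mul_of_tsum_eq (hrow i) j
    simp_rw [h]
    rw [Measure.sum_comm]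
    simp_rw [Measure.sum_smul_eq_tsum_smul, hcol, P.sum_smul_cond_cell]

lemma lintegral_edist_cond_prod_le (i j : ℕ) :
    ∫⁻ z, edist z.1 z.2 ∂(μ[|P.cell i]).prod (ν[|P.cell j]) ≤
      edist (P.center i) (P.center j) + 2 * ε := by
  have hae : ∀ᵐ z ∂(μ[|P.cell i]).prod (ν[|P.cell j]),
      edist z.1 z.2 ≤ edist (P.center i) (P.center j) + 2 * ε := by
    filter_upwards [Measure.quasiMeasurePreserving_fst.ae (ae_cond_mem (P.measurableSet_cell i)),
      Measure.quasiMeasurePreserving_snd.ae (ae_cond_mem (P.measurableSet_cell j))] with z h₁ h₂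
    calc edist z.1 z.2
        ≤ edist z.1 (P.center i) + edist (P.center i) (P.center j) + edist (P.center j) z.2 :=
          edist_triangle4 _ _ _ _
      _ ≤ ε + edist (P.center i) (P.center j) + ε := by
          rw [edist_comm (P.center j)]
          gcongr
          exacts [P.edist_center_le h₁, P.edist_center_le h₂]
      _ = _ := by ring
  calc _ ≤ ∫⁻ _, (edist (P.center i) (P.center j) + 2 * ε) ∂(μ[|P.cell i]).prod (ν[|P.cell j]) :=
        lintegral_mono_ae hae
    _ ≤ _ := by
      rw [lintegral_const, ← univ_prod_univ, Measure.prod_prod]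
      exact mul_le_of_le_one_right' (mul_le_one' prob_le_one prob_le_one)

lemma lintegral_edist_glue_le (C : ℕ → ℕ → ℝ≥0∞) :
    ∫⁻ z, edist z.1 z.2 ∂P.glue μ ν C ≤
      ∑' i, ∑' j, C i j * (edist (P.center i) (P.center j) + 2 * ε) := by
  simp only [glue, lintegral_sum_measure, lintegral_smul_measure, smul_eq_mul]
  exact ENNReal.tsum_le_tsum fun i ↦ ENNReal.tsum_le_tsum fun j ↦
    mul_le_mul_right (P.lintegral_edist_cond_prod_le i j) _

lemma measurable_glue {Ω : Type*} [MeasurableSpace Ω] {μ ν : Ω → Measure Q} (hμ : Measurable μ)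
    (hν : Measurable ν) [∀ ω, IsFiniteMeasure (μ ω)] [∀ ω, IsFiniteMeasure (ν ω)]
    {C : Ω → ℕ → ℕ → ℝ≥0∞} (hC : ∀ i j, Measurable fun ω ↦ C ω i j) :
    Measurable fun ω ↦ P.glue (μ ω) (ν ω) (C ω) := by
  refine Measure.measurable_of_measurable_coe _ fun s hs ↦ ?_
  simp only [glue, Measure.sum_apply _ hs, Measure.smul_apply, smul_eq_mul]
  exact Measurable.tsum fun i ↦ Measurable.tsum fun j ↦ (hC i j).mul <|
    (Measure.measurable_coe hs).comp <| (hμ.cond_measure (P.measurableSet_cell i)).prod_measure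
      (hν.cond_measure (P.measurableSet_cell j))

end CellPartition

section Completion

variable {ι κ : Type*}

lemma tsum_mul_div_le {x η : ℝ≥0∞} {y : ι → ℝ≥0∞} (hy : ∑' i, y i = η) :
    ∑' i, x * y i / η ≤ x := by
  simp_rw [div_eq_mul_inv, ENNReal.tsum_mul_right, ENNReal.tsum_mul_left, hy, mul_assoc]
  exact mul_le_of_le_one_right' (ENNReal.mul_inv_le_one η)

lemma tsum_mul_div_eq {x η : ℝ≥0∞} {y : ι → ℝ≥0∞} (hy : ∑' i, y i = η) (hx : x ≤ η)
    (hη : η ≠ ∞) : ∑' i, x * y i / η = x := by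
  rcases eq_or_ne η 0 with rfl | h₀
  · simp [nonpos_iff_eq_zero.1 hx]
  · simp_rw [div_eq_mul_inv, ENNReal.tsum_mul_right, ENNReal.tsum_mul_left, hy, mul_assoc,
      ENNReal.mul_inv_cancel h₀ hη, mul_one]

/-- The residual marginals of the sub-coupling `R` are coupled independently; when there is no
residual mass the added term is `0 / 0 = 0`. -/
noncomputable def completeCoupling (a : ι → ℝ≥0∞) (b : κ → ℝ≥0∞) (R : ι → κ → ℝ≥0∞)
    (i : ι) (j : κ) : ℝ≥0∞ :=
  R i j + (a i - ∑' j, R i j) * (b j - ∑' i, R i j) / ∑' i, (a i - ∑' j, R i j)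

/-- Bounds the cost of `completeCoupling a b R` when `d i j ≤ w i + w' j`: the residual mass is
routed through a hub at distances `w` and `w'`. -/
noncomputable def completionCost (a : ι → ℝ≥0∞) (b : κ → ℝ≥0∞) (R d : ι → κ → ℝ≥0∞)
    (w : ι → ℝ≥0∞) (w' : κ → ℝ≥0∞) : ℝ≥0∞ :=
  ∑' i, ∑' j, R i j * d i j + ∑' i, (a i - ∑' j, R i j) * w i +
    ∑' j, (b j - ∑' i, R i j) * w' j

variable {a : ι → ℝ≥0∞} {b : κ → ℝ≥0∞} {R : ι → κ → ℝ≥0∞}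

lemma tsum_residual_eq (hrow : ∀ i, ∑' j, R i j ≤ a i) (hcol : ∀ j, ∑' i, R i j ≤ b j)
    (hab : ∑' i, a i = ∑' j, b j) (ha : ∑' i, a i ≠ ∞) :
    ∑' j, (b j - ∑' i, R i j) = ∑' i, (a i - ∑' j, R i j) := by
  have hR : ∑' i, ∑' j, R i j ≠ ∞ := ne_top_of_le_ne_top ha (ENNReal.tsum_le_tsum hrow)
  refine (ENNReal.add_left_inj hR).1 ?_
  calc ∑' j, (b j - ∑' i, R i j) + ∑' i, ∑' j, R i j
      = ∑' j, (b j - ∑' i, R i j + ∑' i, R i j) := by rw [ENNReal.tsum_comm, ENNReal.tsum_add]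
    _ = ∑' i, (a i - ∑' j, R i j + ∑' j, R i j) := by
      simp_rw [tsub_add_cancel_of_le (hrow _), tsub_add_cancel_of_le (hcol _), hab]
    _ = _ := ENNReal.tsum_add

lemma tsum_completeCoupling_right (hrow : ∀ i, ∑' j, R i j ≤ a i)
    (hcol : ∀ j, ∑' i, R i j ≤ b j) (hab : ∑' i, a i = ∑' j, b j) (ha : ∑' i, a i ≠ ∞)
    (i : ι) : ∑' j, completeCoupling a b R i j = a i := by
  have hη : ∑' i, (a i - ∑' j, R i j) ≠ ∞ :=
    ne_top_of_le_ne_top ha (ENNReal.tsum_le_tsum fun _ ↦ tsub_le_self)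
  simp only [completeCoupling]
  rw [ENNReal.tsum_add, tsum_mul_div_eq (tsum_residual_eq hrow hcol hab ha)
    (ENNReal.le_tsum i) hη, add_tsub_cancel_of_le (hrow i)]

lemma tsum_completeCoupling_left (hrow : ∀ i, ∑' j, R i j ≤ a i)
    (hcol : ∀ j, ∑' i, R i j ≤ b j) (hab : ∑' i, a i = ∑' j, b j) (ha : ∑' i, a i ≠ ∞)
    (j : κ) : ∑' i, completeCoupling a b R i j = b j := by
  have hη : ∑' i, (a i - ∑' j, R i j) ≠ ∞ :=
    ne_top_of_le_ne_top ha (ENNReal.tsum_le_tsum fun _ ↦ tsub_le_self)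
  simp_rw [completeCoupling, mul_comm (a _ - _)]
  rw [ENNReal.tsum_add, tsum_mul_div_eq rfl
    ((ENNReal.le_tsum j).trans_eq (tsum_residual_eq hrow hcol hab ha)) hη,
    add_tsub_cancel_of_le (hcol j)]

lemma tsum_completeCoupling_mul_le (hrow : ∀ i, ∑' j, R i j ≤ a i)
    (hcol : ∀ j, ∑' i, R i j ≤ b j) (hab : ∑' i, a i = ∑' j, b j) (ha : ∑' i, a i ≠ ∞)
    {d : ι → κ → ℝ≥0∞} {w : ι → ℝ≥0∞} {w' : κ → ℝ≥0∞} (hd : ∀ i j, d i j ≤ w i + w' j) :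
    ∑' i, ∑' j, completeCoupling a b R i j * d i j ≤ completionCost a b R d w w' := by
  set u := fun i ↦ a i - ∑' j, R i j
  set v := fun j ↦ b j - ∑' i, R i j
  set η := ∑' i, u i
  have hv : ∑' j, v j = η := tsum_residual_eq hrow hcol hab ha
  have key : ∑' i, ∑' j, u i * v j / η * d i j ≤ ∑' i, u i * w i + ∑' j, v j * w' j :=
    calc ∑' i, ∑' j, u i * v j / η * d i j
        ≤ ∑' i, ∑' j, (u i * w i * v j / η + v j * w' j * u i / η) := by
          gcongr with i j
          calc u i * v j / η * d i j ≤ u i * v j / η * (w i + w' j) := by gcongr; exact hd i j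
            _ = _ := by simp only [div_eq_mul_inv]; ring
      _ = ∑' i, ∑' j, u i * w i * v j / η + ∑' j, ∑' i, v j * w' j * u i / η := by
          simp_rw [ENNReal.tsum_add]
          rw [ENNReal.tsum_comm (f := fun i j ↦ v j * w' j * u i / η)]
      _ ≤ _ := add_le_add (ENNReal.tsum_le_tsum fun _ ↦ tsum_mul_div_le hv)
          (ENNReal.tsum_le_tsum fun _ ↦ tsum_mul_div_le rfl)
  calc ∑' i, ∑' j, completeCoupling a b R i j * d i j
      = ∑' i, ∑' j, R i j * d i j + ∑' i, ∑' j, u i * v j / η * d i j := by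
        simp_rw [completeCoupling, add_mul, ENNReal.tsum_add]
        rfl
    _ ≤ completionCost a b R d w w' := by
        rw [completionCost, add_assoc]
        gcongr

lemma ENNReal.tsum_sub_tsum_le (f g : ι → ℝ≥0∞) :
    ∑' i, f i - ∑' i, g i ≤ ∑' i, (f i - g i) :=
  tsub_le_iff_right.2 <| (ENNReal.tsum_le_tsum fun _ ↦ le_tsub_add).trans_eq ENNReal.tsum_add

lemma completionCost_le {M d : ι → κ → ℝ≥0∞} {w : ι → ℝ≥0∞} {w' : κ → ℝ≥0∞}
    (hMa : ∀ i, ∑' j, M i j = a i) (hMb : ∀ j, ∑' i, M i j = b j) (hRM : ∀ i j, R i j ≤ M i j) :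
    completionCost a b R d w w' ≤
      ∑' i, ∑' j, M i j * d i j + ∑' i, ∑' j, (M i j - R i j) * (w i + w' j) := by
  have hrow (i : ι) : a i - ∑' j, R i j ≤ ∑' j, (M i j - R i j) :=
    hMa i ▸ ENNReal.tsum_sub_tsum_le _ _
  have hcol (j : κ) : b j - ∑' i, R i j ≤ ∑' i, (M i j - R i j) :=
    hMb j ▸ ENNReal.tsum_sub_tsum_le _ _
  calc completionCost a b R d w w'
      ≤ ∑' i, ∑' j, M i j * d i j + ∑' i, (∑' j, (M i j - R i j)) * w i +
          ∑' j, (∑' i, (M i j - R i j)) * w' j := by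
        unfold completionCost
        gcongr with i j i j
        exacts [hRM i j, hrow i, hcol j]
    _ = _ := by
        simp_rw [mul_add, ENNReal.tsum_add, ← ENNReal.tsum_mul_right, add_assoc]
        rw [ENNReal.tsum_comm (f := fun i j ↦ (M i j - R i j) * w' j)]

lemma measurable_completeCoupling [Countable ι] [Countable κ] {Ω : Type*} [MeasurableSpace Ω]
    {a : Ω → ι → ℝ≥0∞} {b : Ω → κ → ℝ≥0∞} {R : Ω → ι → κ → ℝ≥0∞}
    (ha : ∀ i, Measurable fun ω ↦ a ω i) (hb : ∀ j, Measurable fun ω ↦ b ω j)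
    (hR : ∀ i j, Measurable fun ω ↦ R ω i j) (i : ι) (j : κ) :
    Measurable fun ω ↦ completeCoupling (a ω) (b ω) (R ω) i j := by
  unfold completeCoupling
  fun_prop

end Completion

lemma exists_rat_le_tsub_mul_le {x w η : ℝ≥0∞} (hx : x ≠ ∞) (hw : w ≠ ∞) (hη : η ≠ 0) :
    ∃ q : ℚ, ENNReal.ofReal q ≤ x ∧ (x - ENNReal.ofReal q) * w ≤ η := by
  rcases eq_or_ne x 0 with rfl | hx₀
  · exact ⟨0, by simp, by simp⟩
  rcases eq_or_ne w 0 with rfl | hw₀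
  · exact ⟨0, by simp, by simp⟩
  obtain ⟨q, -, hq, hqx⟩ := ENNReal.lt_iff_exists_rat_btwn.1
    (ENNReal.sub_lt_self hx hx₀ (ENNReal.div_ne_zero.2 ⟨hη, hw⟩))
  refine ⟨q, hqx.le, ?_⟩
  calc (x - ENNReal.ofReal q) * w ≤ η / w * w := by
        gcongr
        exact tsub_le_iff_left.2 (tsub_le_iff_right.1 hq.le)
    _ = η := ENNReal.div_mul_cancel hw₀ hw

lemma exists_finsupp_rat_approx {α : Type*} [Countable α] {P W : α → ℝ≥0∞}
    (hP : ∀ a, P a ≠ ∞) (hW : ∀ a, W a ≠ ∞) (hPW : ∑' a, P a * W a ≠ ∞) {δ : ℝ≥0∞}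
    (hδ : δ ≠ 0) :
    ∃ f : α →₀ ℚ, (∀ a, ENNReal.ofReal (f a) ≤ P a) ∧
      ∑' a, (P a - ENNReal.ofReal (f a)) * W a ≤ δ := by
  classical
  have hδ₂ : δ / 2 ≠ 0 := ENNReal.div_ne_zero.2 ⟨hδ, ENNReal.ofNat_ne_top⟩
  obtain ⟨η, hη₀, hη⟩ := ENNReal.exists_pos_sum_of_countable hδ₂ α
  choose q hqP hqW using fun a ↦
    exists_rat_le_tsub_mul_le (hP a) (hW a) (ENNReal.coe_ne_zero.2 (hη₀ a).ne')
  obtain ⟨F, hF⟩ := ((ENNReal.tendsto_tsum_compl_atTop_zero hPW).eventually_lt_const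
    (pos_iff_ne_zero.2 hδ₂)).exists
  refine ⟨Finsupp.indicator F fun a _ ↦ q a, fun a ↦ ?_, ?_⟩
  · rw [Finsupp.indicator_apply]
    split_ifs
    exacts [hqP a, by simp]
  calc ∑' a, (P a - ENNReal.ofReal (Finsupp.indicator F (fun a _ ↦ q a) a)) * W a
      ≤ ∑' a, ((η a : ℝ≥0∞) + {a | a ∉ F}.indicator (fun a ↦ P a * W a) a) :=
        ENNReal.tsum_le_tsum fun a ↦ by
          rw [Finsupp.indicator_apply]
          by_cases ha : a ∈ F
          · simpa [ha] using hqW a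
          · simp [ha]
    _ = ∑' a, (η a : ℝ≥0∞) + ∑' a : {a // a ∉ F}, P a * W a := by
        rw [ENNReal.tsum_add, ← tsum_subtype]
        rfl
    _ ≤ δ / 2 + δ / 2 := add_le_add hη.le hF.le
    _ = δ := ENNReal.add_halves δ

noncomputable def ratMasses (f : ℕ × ℕ →₀ ℚ) (i j : ℕ) : ℝ≥0∞ := ENNReal.ofReal (f (i, j))

namespace CellPartition

variable {Q : Type*} [PseudoMetricSpace Q] [MeasurableSpace Q] {ε : ℝ≥0∞}
  (P : CellPartition Q ε)

def IsFeasible (q₀ : Q) (μ ν : Measure Q) (c : ℝ≥0∞) (R : ℕ → ℕ → ℝ≥0∞) : Prop :=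
  (∀ i, ∑' j, R i j ≤ μ (P.cell i)) ∧ (∀ j, ∑' i, R i j ≤ ν (P.cell j)) ∧
    completionCost (fun i ↦ μ (P.cell i)) (fun j ↦ ν (P.cell j)) R
      (fun i j ↦ edist (P.center i) (P.center j)) (fun i ↦ edist (P.center i) q₀)
      (fun j ↦ edist (P.center j) q₀) ≤ c

lemma tsum_measure_prod_cell_mul_ne_top {π : Measure (Q × Q)} {μ ν : Measure Q}
    [IsFiniteMeasure μ] [IsFiniteMeasure ν] (hπ : IsCoupling π μ ν) {q₀ : Q}
    (hμ : ∫⁻ q, edist q q₀ ∂μ ≠ ∞) (hν : ∫⁻ q, edist q q₀ ∂ν ≠ ∞) (hε : ε ≠ ∞) :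
    ∑' p : ℕ × ℕ, π (P.cell p.1 ×ˢ P.cell p.2) *
      (edist (P.center p.1) q₀ + edist (P.center p.2) q₀) ≠ ∞ := by
  have hrow (i : ℕ) := P.tsum_measure_prod_cell_right hπ.1 i
  have hcol (j : ℕ) := P.tsum_measure_prod_cell_left hπ.2 j
  rw [ENNReal.tsum_prod (f := fun i j ↦
    π (P.cell i ×ˢ P.cell j) * (edist (P.center i) q₀ + edist (P.center j) q₀))]
  simp_rw [mul_add, ENNReal.tsum_add, ENNReal.tsum_mul_right, hrow]
  rw [ENNReal.tsum_comm]
  simp_rw [ENNReal.tsum_mul_right, hcol]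
  refine ENNReal.add_ne_top.2 ⟨ne_top_of_le_ne_top ?_ (P.tsum_measure_cell_mul_edist_le μ q₀),
    ne_top_of_le_ne_top ?_ (P.tsum_measure_cell_mul_edist_le ν q₀)⟩ <;> finiteness

theorem exists_isFeasible_ratMasses {μ ν : Measure Q} [IsProbabilityMeasure μ]
    [IsProbabilityMeasure ν] {q₀ : Q} (hμ : ∫⁻ q, edist q q₀ ∂μ ≠ ∞)
    (hν : ∫⁻ q, edist q q₀ ∂ν ≠ ∞) {c : ℝ≥0∞} (hc : minCost 1 μ ν < c) (hε : ε ≠ ∞)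
    {δ : ℝ≥0∞} (hδ : δ ≠ 0) :
    ∃ f : ℕ × ℕ →₀ ℚ, P.IsFeasible q₀ μ ν (c + 2 * ε + δ) (ratMasses f) := by
  obtain ⟨π, hπ, hπc⟩ := exists_isCoupling_lintegral_edist_lt hc
  have hπ₁ : π univ = 1 := by rw [hπ.measure_univ, measure_univ]
  have : IsProbabilityMeasure π := ⟨hπ₁⟩
  have hrow (i : ℕ) := P.tsum_measure_prod_cell_right hπ.1 i
  have hcol (j : ℕ) := P.tsum_measure_prod_cell_left hπ.2 j
  obtain ⟨f, hfπ, hfδ⟩ := exists_finsupp_rat_approx (fun _ ↦ measure_ne_top π _)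
    (fun _ ↦ by finiteness) (P.tsum_measure_prod_cell_mul_ne_top hπ hμ hν hε) hδ
  have hR (i j : ℕ) : ratMasses f i j ≤ π (P.cell i ×ˢ P.cell j) := hfπ (i, j)
  refine ⟨f, fun i ↦ (ENNReal.tsum_le_tsum (hR i)).trans_eq (hrow i),
    fun j ↦ (ENNReal.tsum_le_tsum (hR · j)).trans_eq (hcol j), ?_⟩
  calc _ ≤ _ := completionCost_le hrow hcol hR
    _ ≤ (∫⁻ z, edist z.1 z.2 ∂π + 2 * ε * π univ) + δ := by
        gcongr
        · exact P.tsum_measure_cell_prod_mul_edist_le π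
        · rw [← ENNReal.tsum_prod]
          exact hfδ
    _ ≤ c + 2 * ε + δ := by rw [hπ₁, mul_one]; gcongr

/-- The rational candidates are countable, so the first feasible one in an enumeration is a
measurable choice. -/
theorem exists_measurable_isFeasible {Ω : Type*} [MeasurableSpace Ω] {μ ν : Ω → Measure Q}
    (hμ : Measurable μ) (hν : Measurable ν) [∀ ω, IsProbabilityMeasure (μ ω)]
    [∀ ω, IsProbabilityMeasure (ν ω)] {q₀ : Q} (hμm : ∀ ω, ∫⁻ q, edist q q₀ ∂μ ω ≠ ∞)
    (hνm : ∀ ω, ∫⁻ q, edist q q₀ ∂ν ω ≠ ∞) {c : ℝ≥0∞} (hc : ∀ ω, minCost 1 (μ ω) (ν ω) < c)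
    (hε : ε ≠ ∞) {δ : ℝ≥0∞} (hδ : δ ≠ 0) :
    ∃ R : Ω → ℕ → ℕ → ℝ≥0∞, (∀ i j, Measurable fun ω ↦ R ω i j) ∧
      ∀ ω, P.IsFeasible q₀ (μ ω) (ν ω) (c + 2 * ε + δ) (R ω) := by
  classical
  obtain ⟨enum, henum⟩ := exists_surjective_nat (ℕ × ℕ →₀ ℚ)
  have hex (ω : Ω) : ∃ n, P.IsFeasible q₀ (μ ω) (ν ω) (c + 2 * ε + δ) (ratMasses (enum n)) := by
    obtain ⟨f, hf⟩ := P.exists_isFeasible_ratMasses (hμm ω) (hνm ω) (hc ω) hε hδ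
    obtain ⟨n, rfl⟩ := henum f
    exact ⟨n, hf⟩
  have hmeas (n : ℕ) :
      MeasurableSet {ω | P.IsFeasible q₀ (μ ω) (ν ω) (c + 2 * ε + δ) (ratMasses (enum n))} := by
    have := P.measurable_measure_cell hμ
    have := P.measurable_measure_cell hν
    simp only [IsFeasible, completionCost, ofPred_and, ofPred_forall]
    exact .inter (.iInter fun i ↦ measurableSet_le (by fun_prop) (by fun_prop))
      (.inter (.iInter fun j ↦ measurableSet_le (by fun_prop) (by fun_prop))
        (measurableSet_le (by fun_prop) (by fun_prop)))
  exact ⟨fun ω ↦ ratMasses (enum (Nat.find (hex ω))),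
    fun i j ↦ (measurable_from_nat (f := fun n ↦ ratMasses (enum n) i j)).comp
      (measurable_find hex hmeas),
    fun ω ↦ Nat.find_spec (hex ω)⟩

end CellPartition

theorem exists_measurable_coupling_lintegral_edist_le {Ω Q : Type*} [MeasurableSpace Ω]
    [PseudoMetricSpace Q] [MeasurableSpace Q] [BorelSpace Q] [SeparableSpace Q]
    {μ ν : Ω → Measure Q} (hμ : Measurable μ) (hν : Measurable ν)
    [∀ ω, IsProbabilityMeasure (μ ω)] [∀ ω, IsProbabilityMeasure (ν ω)]
    (hμm : ∀ ω, FinMoment 1 (μ ω)) (hνm : ∀ ω, FinMoment 1 (ν ω)) {c : ℝ≥0∞}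
    (hc : ∀ ω, minCost 1 (μ ω) (ν ω) < c) {r : ℝ≥0∞} (hr : r ≠ 0) (hr' : r ≠ ∞) :
    ∃ Θ : Ω → Measure (Q × Q), Measurable Θ ∧
      ∀ ω, IsCoupling (Θ ω) (μ ω) (ν ω) ∧ ∫⁻ z, edist z.1 z.2 ∂Θ ω ≤ c + 5 * r := by
  rcases isEmpty_or_nonempty Q with hQ | hQ
  · refine ⟨0, measurable_const, fun ω ↦ absurd (measure_univ (μ := μ ω)) ?_⟩
    simp [Set.univ_eq_empty_iff.2 hQ]
  obtain ⟨P⟩ := CellPartition.nonempty (Q := Q) hr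
  obtain ⟨q₀⟩ := hQ
  obtain ⟨R, hRm, hR⟩ := P.exists_measurable_isFeasible hμ hν
    (fun ω ↦ (hμm ω).lintegral_edist_ne_top q₀) (fun ω ↦ (hνm ω).lintegral_edist_ne_top q₀) hc
    hr' hr
  have hμ₁ (ω : Ω) : ∑' i, μ ω (P.cell i) = 1 := by rw [P.tsum_measure_cell, measure_univ]
  have hν₁ (ω : Ω) : ∑' j, ν ω (P.cell j) = 1 := by rw [P.tsum_measure_cell, measure_univ]
  have hab (ω : Ω) := (hμ₁ ω).trans (hν₁ ω).symm
  have ha (ω : Ω) : ∑' i, μ ω (P.cell i) ≠ ∞ := by rw [hμ₁]; exact ENNReal.one_ne_top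
  let C (ω : Ω) := completeCoupling (fun i ↦ μ ω (P.cell i)) (fun j ↦ ν ω (P.cell j)) (R ω)
  have hCrow (ω : Ω) := tsum_completeCoupling_right (hR ω).1 (hR ω).2.1 (hab ω) (ha ω)
  have hCcol (ω : Ω) := tsum_completeCoupling_left (hR ω).1 (hR ω).2.1 (hab ω) (ha ω)
  refine ⟨fun ω ↦ P.glue (μ ω) (ν ω) (C ω), P.measurable_glue hμ hν
    (measurable_completeCoupling (P.measurable_measure_cell hμ) (P.measurable_measure_cell hν) hRm),
    fun ω ↦ ⟨P.isCoupling_glue (hCrow ω) (hCcol ω), ?_⟩⟩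
  calc ∫⁻ z, edist z.1 z.2 ∂P.glue (μ ω) (ν ω) (C ω)
      ≤ ∑' i, ∑' j, C ω i j * (edist (P.center i) (P.center j) + 2 * r) :=
        P.lintegral_edist_glue_le _
    _ = ∑' i, ∑' j, C ω i j * edist (P.center i) (P.center j) +
          (∑' i, ∑' j, C ω i j) * (2 * r) := by
        simp_rw [mul_add, ENNReal.tsum_add, ENNReal.tsum_mul_right]
    _ ≤ (c + 2 * r + r) + 1 * (2 * r) := by
        gcongr
        · exact (tsum_completeCoupling_mul_le (hR ω).1 (hR ω).2.1 (hab ω) (ha ω)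
            fun i j ↦ edist_triangle_right (P.center i) (P.center j) q₀).trans (hR ω).2.2
        · exact ((tsum_congr (hCrow ω)).trans (hμ₁ ω)).le
    _ = c + 5 * r := by ring

theorem minCost_bind_le {Ω Q : Type*} [MeasurableSpace Ω] [PseudoMetricSpace Q]
    [MeasurableSpace Q] [BorelSpace Q] [SeparableSpace Q] (ν : Measure Ω) [IsProbabilityMeasure ν]
    {μ₁ μ₂ : Ω → Measure Q} (hμ₁ : Measurable μ₁) (hμ₂ : Measurable μ₂)
    [∀ ω, IsProbabilityMeasure (μ₁ ω)] [∀ ω, IsProbabilityMeasure (μ₂ ω)]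
    (hm₁ : ∀ ω, FinMoment 1 (μ₁ ω)) (hm₂ : ∀ ω, FinMoment 1 (μ₂ ω)) {c : ℝ≥0∞}
    (hc : ∀ ω, minCost 1 (μ₁ ω) (μ₂ ω) ≤ c) : minCost 1 (ν.bind μ₁) (ν.bind μ₂) ≤ c := by
  have := UniformSpace.secondCountable_of_separable Q
  rcases eq_or_ne c ∞ with rfl | hc'
  · exact le_top
  refine ENNReal.le_of_forall_pos_le_add fun ε hε _ ↦ ?_
  set r : ℝ≥0∞ := ε / 6
  have hr : r ≠ 0 := ENNReal.div_ne_zero.2 ⟨by simpa using hε.ne', by norm_num⟩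
  obtain ⟨Θ, hΘ, hΘc⟩ := exists_measurable_coupling_lintegral_edist_le hμ₁ hμ₂ hm₁ hm₂
    (fun ω ↦ (hc ω).trans_lt (ENNReal.lt_add_right hc' hr)) hr (by finiteness)
  calc minCost 1 (ν.bind μ₁) (ν.bind μ₂) ≤ ∫⁻ z, edist z.1 z.2 ∂ν.bind Θ :=
        minCost_le_lintegral_edist (.bind hΘ hμ₁ hμ₂ fun ω ↦ (hΘc ω).1)
    _ = ∫⁻ ω, ∫⁻ z, edist z.1 z.2 ∂Θ ω ∂ν :=
        Measure.lintegral_bind hΘ.aemeasurable measurable_edist.aemeasurable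
    _ ≤ ∫⁻ _, (c + r + 5 * r) ∂ν := lintegral_mono fun ω ↦ (hΘc ω).2
    _ = c + ε := by
        rw [lintegral_const, measure_univ, mul_one, add_assoc, ← one_add_mul,
          show (1 + 5 : ℝ≥0∞) = 6 by norm_num, ENNReal.mul_div_cancel (by norm_num) (by norm_num)]

lemma Continuous.exists_eq_ciInf {β : Type*} [TopologicalSpace β] [CompactSpace β] [Nonempty β]
    {f : β → ℝ} (hf : Continuous f) : ∃ b, f b = ⨅ b', f b' := by
  obtain ⟨b, -, hb⟩ := isCompact_univ.exists_isMinOn univ_nonempty hf.continuousOn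
  exact ⟨b, le_antisymm (le_ciInf fun b' ↦ hb (mem_univ b'))
    (ciInf_le (isCompact_range hf).bddBelow b)⟩

theorem ollivier_quotient_general
    {M : Type*} [MetricSpace M] [TopologicalSpace.SeparableSpace M]
    [MeasurableSpace M] [BorelSpace M]
    {G : Type*} [Group G] [TopologicalSpace G] [CompactSpace G]
    [MeasurableSpace G] [BorelSpace G] [MulAction G M]
    (hcont : Continuous fun q : G × M => q.1 • q.2)
    (hiso : ∀ (g : G) (x y : M), dist (g • x) (g • y) = dist x y)
    (νG : Measure G) [IsProbabilityMeasure νG]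
    {Q : Type*} [MetricSpace Q] [MeasurableSpace Q] [BorelSpace Q]
    (pr : M → Q) (hsurj : Function.Surjective pr) (hmeas : Measurable pr)
    (hfib : ∀ x y : M, pr x = pr y ↔ y ∈ MulAction.orbit G x)
    (hdist : ∀ x y : M, dist (pr x) (pr y) = ⨅ g : G, dist (g • x) y)
    (μ : M → Measure M) (hprob : ∀ x, IsProbabilityMeasure (μ x))
    (hmom : ∀ x, FinMoment 1 (μ x))
    (k : ℝ)
    (hric : ∀ x y : M, Wp 1 (μ x) (μ y) ≤ ENNReal.ofReal ((1 - k) * dist x y))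
    (μq : Q → Measure Q)
    (hμq : ∀ x : M, μq (pr x) = νG.bind fun g => (μ (g • x)).map pr) :
    ∀ x y : M, Wp 1 (μq (pr x)) (μq (pr y)) ≤ ENNReal.ofReal ((1 - k) * dist (pr x) (pr y)) := by
  intro x y
  have hpr : LipschitzWith 1 pr := .of_dist_le_mul fun a b ↦ by
    simpa [hdist] using
      ciInf_le ⟨0, forall_mem_range.2 fun _ ↦ dist_nonneg⟩ (1 : G) (f := fun g ↦ dist (g • a) b)
  have : SeparableSpace Q := hsurj.denseRange.separableSpace hpr.continuous
  have hact (z : M) : Continuous fun g : G ↦ g • z := hcont.comp (.prodMk_left z)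
  obtain ⟨g₀, hg₀⟩ := ((hact x).dist continuous_const).exists_eq_ciInf
  have hμ : Measurable μ := measurable_of_Wp_one_le hric
  have (z : M) : IsProbabilityMeasure ((μ z).map pr) :=
    Measure.isProbabilityMeasure_map hmeas.aemeasurable
  rw [hdist, ← hg₀, (hfib x (g₀ • x)).2 (MulAction.mem_orbit x g₀), hμq, hμq, Wp_one]
  refine minCost_bind_le νG (by fun_prop) (by fun_prop) (fun _ ↦ (hmom _).map hpr)
    (fun _ ↦ (hmom _).map hpr) fun g ↦ ?_
  calc minCost 1 ((μ (g • g₀ • x)).map pr) ((μ (g • y)).map pr)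
      ≤ minCost 1 (μ (g • g₀ • x)) (μ (g • y)) := minCost_map_le hmeas hpr _ _
    _ ≤ ENNReal.ofReal ((1 - k) * dist (g₀ • x) y) := by
        simpa only [Wp_one, hiso] using hric (g • g₀ • x) (g • y)

/-- Let `(M,d)` be a separable complete metric space with a Markov chain
`μ : M → P₁(M)` having Ollivier coarse Ricci curvature bounded below by `k`, i.e.
`W₁(μ_x, μ_y) ≤ (1-k) d(x,y)`.  Let `G` be a compact group acting isometrically with Haar
probability measure `νG`, quotient map `pr : M → Q`, and let the quotient Markov chain be
`μ̌_{x*} = ∫_G pr_♯ μ_{g•x} dνG(g)`.  Then `W₁(μ̌_{x*}, μ̌_{y*}) ≤ (1-k) d*(x*, y*)`. -/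
theorem ollivier_quotient
    {M : Type*} [MetricSpace M] [CompleteSpace M] [TopologicalSpace.SeparableSpace M]
    [MeasurableSpace M] [BorelSpace M]
    {G : Type*} [Group G] [TopologicalSpace G] [IsTopologicalGroup G] [CompactSpace G]
    [MeasurableSpace G] [BorelSpace G] [MulAction G M]
    (hcont : Continuous fun q : G × M => q.1 • q.2)
    (hiso : ∀ (g : G) (x y : M), dist (g • x) (g • y) = dist x y)
    (νG : Measure G) [IsProbabilityMeasure νG] [νG.IsMulLeftInvariant]
    {Q : Type*} [MetricSpace Q] [MeasurableSpace Q] [BorelSpace Q]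
    (pr : M → Q) (hsurj : Function.Surjective pr) (hmeas : Measurable pr)
    (hfib : ∀ x y : M, pr x = pr y ↔ y ∈ MulAction.orbit G x)
    (hdist : ∀ x y : M, dist (pr x) (pr y) = ⨅ g : G, dist (g • x) y)
    (μ : M → Measure M) (hprob : ∀ x, IsProbabilityMeasure (μ x))
    (hmom : ∀ x, FinMoment 1 (μ x))
    (k : ℝ)
    (hric : ∀ x y : M, Wp 1 (μ x) (μ y) ≤ ENNReal.ofReal ((1 - k) * dist x y))
    (μq : Q → Measure Q)
    (hμq : ∀ x : M, μq (pr x) = νG.bind fun g => (μ (g • x)).map pr) :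
    ∀ x y : M, Wp 1 (μq (pr x)) (μq (pr y)) ≤ ENNReal.ofReal ((1 - k) * dist (pr x) (pr y)) :=
  ollivier_quotient_general hcont hiso νG pr hsurj hmeas hfib hdist μ hprob hmom k hric μq hμq
end
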